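/- arXiv:2412.20208 — 8 statements merged into one kernel-verified Lean document; each statement's English description precedes it below -/
import Mathlib

section
/- Let X be a nontrivial finite group with k := k(X) conjugacy classes, let H ≤ Sym({1,…,n}) be a permutation group, and let G = X ≀ H. Let H act on the set S^n of functions {1,…,n} → S by permuting coordinates, where S is the set of conjugacy classes of X (equivalently, a set in bijection with Irr(X)). If f₁, …, f_f is a complete list of representatives of the distinct orbits of H on S^n, then k(G) = Σ_{i=1}^{f} k(Stab_H(f_i)), where Stab_H(f_i) is the stabilizer in H of the function f_i (the inertia group of the corresponding irreducible character of X^n). -/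
open Equiv MulAction

/-- The number of conjugacy classes of a group. -/
noncomputable def kclass (G : Type*) [Group G] : ℕ := Nat.card (ConjClasses G)

/-- The coordinate-permuting action of `Perm ι` on `ι → X`, as automorphisms. -/
def permAut (ι X : Type*) [Group X] : Perm ι →* MulAut (ι → X) where
  toFun e :=
    { toFun := fun f => f ∘ e.symm
      invFun := fun f => f ∘ e
      left_inv := fun f => by funext i; simp
      right_inv := fun f => by funext i; simp
      map_mul' := fun f g => rfl }
  map_one' := by ext f; rfl
  map_mul' := fun e₁ e₂ => by ext f; rfl

/-- The wreath product `X ≀ H` of a group `X` with a permutation group `H ≤ Perm ι`,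
i.e. the semidirect product `X^ι ⋊ H` where `H` permutes the direct factors of `X^ι`. -/
abbrev Wreath (X : Type*) [Group X] {ι : Type*} (H : Subgroup (Perm ι)) :=
  SemidirectProduct (ι → X) H ((permAut ι X).comp H.subtype)

/-- A group acting on `Ω` acts on the functions `Ω → S` by permuting coordinates. -/
instance funMulAction (G Ω S : Type*) [Group G] [MulAction G Ω] : MulAction G (Ω → S) where
  smul g f := fun ω => f (g⁻¹ • ω)
  one_smul f := funext fun ω => by
    show f ((1 : G)⁻¹ • ω) = f ω
    rw [inv_one, one_smul]
  mul_smul g h f := funext fun ω => by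
    show f ((g * h)⁻¹ • ω) = f (h⁻¹ • g⁻¹ • ω)
    rw [mul_inv_rev, mul_smul]

/-- `σ(h)`: the number of cycles of a permutation `h` in its disjoint cycle decomposition,
with fixed points counted as cycles of length 1; equivalently, the number of orbits of
the cyclic group generated by `h`. -/
noncomputable def cycleCount {ι : Type*} (h : Perm ι) : ℕ :=
  Nat.card (orbitRel.Quotient (Subgroup.zpowers h) ι)

/-- `n(G, α)`: the number of orbits of a group action. -/
noncomputable def orbitCount (G : Type*) [Group G] (α : Type*) [MulAction G α] : ℕ :=
  Nat.card (orbitRel.Quotient G α)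

/-! An element `x = (v, h)` of `X ≀ H` has, at each point `i`, a cycle product: the `i`-th
coordinate of `x ^ ℓ`, where `ℓ` is the length of the `h`-cycle through `i`. Its conjugacy
class gives an `h`-invariant function `ι → ConjClasses X`, which transforms under conjugation
by `z` through the action of `z.right`. Conjugating by the base group `X ^ ι` moves all of `v`
onto one point per cycle, where it becomes the cycle product; hence two elements with the same
`h` are conjugate exactly when their cycle products are, and every `h`-invariant function
occurs. So the classes of `X ≀ H` are the `H`-orbits of pairs `(F, h)` with `h • F = F`, and the
orbits lying over the orbit of a representative `F` are the classes of `Stab_H F`. -/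

namespace MulAction

variable {G α : Type*} [Group G] [MulAction G α]

section Cycles

lemma period_conj_smul (g h : G) (a : α) : period (g * h * g⁻¹) (g • a) = period h a :=
  Nat.dvd_right_iff_eq.mp fun n => by
    rw [← pow_smul_eq_iff_period_dvd, ← pow_smul_eq_iff_period_dvd, conj_pow, mul_smul, mul_smul,
      inv_smul_smul, smul_left_cancel_iff]

variable (g : G)

noncomputable def cycleBase (a : α) : α :=
  (Quotient.mk'' a : orbitRel.Quotient (Subgroup.zpowers g) α).out

variable {g}

lemma cycleBase_mem_orbit (a : α) : cycleBase g a ∈ orbit (Subgroup.zpowers g) a :=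
  orbitRel_apply.mp (Quotient.eq''.mp (Quotient.out_eq' _))

lemma cycleBase_eq_of_mem_orbit {a b : α} (h : a ∈ orbit (Subgroup.zpowers g) b) :
    cycleBase g a = cycleBase g b := by
  rw [cycleBase, cycleBase, Quotient.sound' (orbitRel_apply.mpr h)]

lemma cycleBase_pow_smul (n : ℕ) (a : α) : cycleBase g (g ^ n • a) = cycleBase g a :=
  cycleBase_eq_of_mem_orbit ⟨⟨g ^ n, n, zpow_natCast g n⟩, rfl⟩

lemma cycleBase_smul (a : α) : cycleBase g (g • a) = cycleBase g a := by
  simpa using cycleBase_pow_smul (g := g) 1 a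

lemma cycleBase_cycleBase (a : α) : cycleBase g (cycleBase g a) = cycleBase g a :=
  cycleBase_eq_of_mem_orbit (cycleBase_mem_orbit a)

lemma pow_smul_inj_of_lt_period {a : α} {m n : ℕ} (hm : m < period g a) (hn : n < period g a)
    (h : g ^ m • a = g ^ n • a) : m = n := by
  rw [← smul_iterate_apply, ← smul_iterate_apply] at h
  exact Function.iterate_injOn_Iio_minimalPeriod hm hn h

variable [Finite G]

lemma exists_pow_smul_cycleBase (g : G) (a : α) : ∃ n : ℕ, g ^ n • cycleBase g a = a := by
  obtain ⟨⟨_, k, rfl⟩, hk⟩ := mem_orbit_symm.mp (cycleBase_mem_orbit (g := g) a)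
  obtain ⟨n, hn⟩ := mem_powers_iff_mem_zpowers.mpr (⟨k, rfl⟩ : g ^ k ∈ Subgroup.zpowers g)
  simp only at hn
  exact ⟨n, by rw [hn]; exact hk⟩

lemma apply_cycleBase {β : Type*} {f : α → β} (hf : ∀ a, f (g • a) = f a) (a : α) :
    f (cycleBase g a) = f a := by
  have key : ∀ (n : ℕ) (b : α), f (g ^ n • b) = f b := by
    intro n
    induction n with
    | zero => simp
    | succ n ih => intro b; rw [pow_succ', mul_smul, hf, ih]
  obtain ⟨n, hn⟩ := exists_pow_smul_cycleBase g a
  exact (key n _).symm.trans (congrArg f hn)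

noncomputable def cyclePos (g : G) (a : α) : ℕ :=
  (exists_pow_smul_cycleBase g a).choose % period g (cycleBase g a)

lemma pow_cyclePos_smul (a : α) : g ^ cyclePos g a • cycleBase g a = a := by
  rw [cyclePos, pow_mod_period_smul, (exists_pow_smul_cycleBase g a).choose_spec]

lemma cyclePos_lt_period (a : α) : cyclePos g a < period g (cycleBase g a) :=
  Nat.mod_lt _ (period_pos_of_orderOf_pos (orderOf_pos g) _)

lemma cyclePos_eq_of_pow_smul {a : α} {m : ℕ} (hm : m < period g (cycleBase g a))
    (h : g ^ m • cycleBase g a = a) : cyclePos g a = m :=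
  pow_smul_inj_of_lt_period (cyclePos_lt_period a) hm (by rw [pow_cyclePos_smul, h])

lemma cyclePos_cycleBase (a : α) : cyclePos g (cycleBase g a) = 0 := by
  apply cyclePos_eq_of_pow_smul <;> rw [cycleBase_cycleBase]
  · exact period_pos_of_orderOf_pos (orderOf_pos g) _
  · rw [pow_zero, one_smul]

lemma pow_cyclePos_add_one_smul (a : α) :
    g ^ (cyclePos g a + 1) • cycleBase g a = g • a := by
  rw [pow_succ', mul_smul, pow_cyclePos_smul]

lemma cyclePos_smul_of_ne {a : α} (h : g • a ≠ cycleBase g a) :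
    cyclePos g (g • a) = cyclePos g a + 1 := by
  have hlt : cyclePos g a + 1 < period g (cycleBase g a) := by
    refine lt_of_le_of_ne (cyclePos_lt_period a) fun heq => h ?_
    rw [← pow_cyclePos_add_one_smul, heq, pow_period_smul]
  apply cyclePos_eq_of_pow_smul <;> rw [cycleBase_smul]
  · exact hlt
  · exact pow_cyclePos_add_one_smul a

lemma cyclePos_add_one_of_eq {a : α} (h : g • a = cycleBase g a) :
    cyclePos g a + 1 = period g (cycleBase g a) := by
  refine le_antisymm (cyclePos_lt_period a) (le_of_not_gt fun hlt => ?_)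
  have := cyclePos_eq_of_pow_smul (a := cycleBase g a) (by rwa [cycleBase_cycleBase])
    (by rw [cycleBase_cycleBase, pow_cyclePos_add_one_smul, h])
  rw [cyclePos_cycleBase] at this
  omega

end Cycles

variable (G α) in
abbrev FixingPair : Type _ := {p : α × G // p.2 • p.1 = p.1}

instance : MulAction G (FixingPair G α) where
  smul g p := ⟨(g • p.1.1, g * p.1.2 * g⁻¹), by simp [mul_smul, p.2]⟩
  one_smul p := Subtype.ext <| Prod.ext (one_smul G p.1.1) <| by
    show 1 * p.1.2 * 1⁻¹ = p.1.2
    group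
  mul_smul g h p := Subtype.ext <| Prod.ext (mul_smul g h p.1.1) <| by
    show g * h * p.1.2 * (g * h)⁻¹ = g * (h * p.1.2 * h⁻¹) * g⁻¹
    group

lemma orbitRel_mk_eq_mk_iff {a b : α} :
    (Quotient.mk'' a : orbitRel.Quotient G α) = Quotient.mk'' b ↔ ∃ g : G, g • b = a := by
  rw [Quotient.eq'', orbitRel_apply, mem_orbit_iff]

lemma card_conjClasses_eq_card_orbits {K β : Type*} [Group K] [MulAction K β]
    {φ : G →* K} (hφ : Function.Surjective φ) {F : G → β}
    (hF_conj : ∀ z x, F (z * x * z⁻¹) = φ z • F x) (hF_surj : Function.Surjective F)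
    (hF_fibre : ∀ x y, F x = F y → IsConj x y) :
    Nat.card (ConjClasses G) = Nat.card (orbitRel.Quotient K β) := by
  refine Nat.card_eq_of_bijective
    (Quotient.map' F fun x y hxy => ?_) ⟨fun c₁ c₂ h => ?_, ?_⟩
  · obtain ⟨z, rfl⟩ := isConj_iff.mp hxy
    exact (orbitRel K β).iseqv.symm (orbitRel_apply.mpr ⟨φ z, (hF_conj z x).symm⟩)
  · induction c₁ using Quotient.inductionOn' with | h x => ?_
    induction c₂ using Quotient.inductionOn' with | h y => ?_
    obtain ⟨k, hk⟩ := orbitRel_mk_eq_mk_iff.mp h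
    obtain ⟨z, rfl⟩ := hφ k
    rw [← hF_conj] at hk
    exact Quotient.sound' ((hF_fibre _ _ hk.symm).trans (isConj_iff.mpr ⟨z, rfl⟩).symm)
  · intro q
    induction q using Quotient.inductionOn' with | h b => ?_
    obtain ⟨x, rfl⟩ := hF_surj b
    exact ⟨Quotient.mk'' x, rfl⟩

lemma card_orbits_fixingPair [Finite G] {ι : Type*} [Fintype ι] {reps : ι → α}
    (hreps : Function.Bijective fun i => (Quotient.mk'' (reps i) : orbitRel.Quotient G α)) :
    Nat.card (orbitRel.Quotient G (FixingPair G α)) =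
      ∑ i, Nat.card (ConjClasses (stabilizer G (reps i))) := by
  let toPair (i : ι) (h : stabilizer G (reps i)) : FixingPair G α := ⟨(reps i, h), h.2⟩
  let Ψ : (Σ i, ConjClasses (stabilizer G (reps i))) → orbitRel.Quotient G (FixingPair G α) :=
    fun c => Quotient.liftOn' c.2 (fun h => Quotient.mk'' (toPair c.1 h)) fun h h' hh' => by
      obtain ⟨s, rfl⟩ := isConj_iff.mp hh'
      refine Quotient.sound' (orbitRel_apply.mpr ⟨s⁻¹, Subtype.ext (Prod.ext ?_ ?_)⟩)
      · exact (s⁻¹).2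
      · show ((s⁻¹ : stabilizer G _) : G) * (s * h * s⁻¹ : stabilizer G _) *
          ((s⁻¹ : stabilizer G _) : G)⁻¹ = h
        push_cast
        group
  have hΨ : Function.Bijective Ψ := by
    refine ⟨?_, fun q => ?_⟩
    · rintro ⟨i, c⟩ ⟨j, c'⟩ hcc'
      induction c using Quotient.inductionOn' with | h h => ?_
      induction c' using Quotient.inductionOn' with | h h' => ?_
      obtain ⟨g, hg⟩ := orbitRel_mk_eq_mk_iff.mp hcc'
      have hga : g • reps j = reps i := congrArg (·.1.1) hg
      have hgh : g * h' * g⁻¹ = h := congrArg (·.1.2) hg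
      obtain rfl : i = j := hreps.1 (orbitRel_mk_eq_mk_iff.mpr ⟨g, hga⟩)
      refine congrArg (Sigma.mk i) (Quotient.sound' (isConj_iff.mpr ⟨⟨g, hga⟩, ?_⟩)).symm
      exact Subtype.ext hgh
    · induction q using Quotient.inductionOn' with | h p => ?_
      obtain ⟨i, hi⟩ := hreps.2 (Quotient.mk'' p.1.1)
      obtain ⟨g, hg⟩ := orbitRel_mk_eq_mk_iff.mp hi
      have hstab : g * p.1.2 * g⁻¹ ∈ stabilizer G (reps i) := by
        rw [mem_stabilizer_iff, ← hg, mul_smul, mul_smul, inv_smul_smul, p.2]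
      refine ⟨⟨i, ConjClasses.mk ⟨_, hstab⟩⟩, orbitRel_mk_eq_mk_iff.mpr ⟨g, ?_⟩⟩
      exact Subtype.ext (Prod.ext hg rfl)
  rw [← Nat.card_eq_of_bijective Ψ hΨ, Nat.card_sigma]

end MulAction

namespace Wreath

open SemidirectProduct

variable {X ι : Type*} [Group X] {H : Subgroup (Perm ι)}

lemma mul_left_apply (x y : Wreath X H) (i : ι) :
    (x * y).left i = x.left i * y.left (x.right⁻¹ • i) := rfl

lemma inv_left_apply (x : Wreath X H) (i : ι) : x⁻¹.left i = (x.left (x.right • i))⁻¹ := rfl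

lemma right_pow (x : Wreath X H) (k : ℕ) : (x ^ k).right = x.right ^ k :=
  map_pow (rightHom : Wreath X H →* H) x k

lemma left_pow_succ_apply (x : Wreath X H) (k : ℕ) (i : ι) :
    (x ^ (k + 1)).left i = (x ^ k).left i * x.left (x.right⁻¹ ^ k • i) := by
  rw [pow_succ, mul_left_apply, right_pow, inv_pow]

lemma conj_left_apply (z x : Wreath X H) (i : ι) :
    (z * x * z⁻¹).left (z.right • i) =
      z.left (z.right • i) * x.left i * (z.left (z.right • x.right⁻¹ • i))⁻¹ := by
  simp [mul_left_apply, inv_left_apply, mul_smul]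

lemma inl_mul_mul_inv (u : ι → X) (x : Wreath X H) :
    inl u * x * (inl u)⁻¹ = ⟨fun i => u i * x.left i * (u (x.right⁻¹ • i))⁻¹, x.right⟩ :=
  SemidirectProduct.ext (funext fun _ => rfl) (by simp)

noncomputable def cycleProduct (x : Wreath X H) (i : ι) : X :=
  (x ^ period x.right i).left i

lemma cycleProduct_conj (z x : Wreath X H) (i : ι) :
    cycleProduct (z * x * z⁻¹) (z.right • i) =
      z.left (z.right • i) * cycleProduct x i * (z.left (z.right • i))⁻¹ := by
  have hperiod : period (z * x * z⁻¹).right (z.right • i) = period x.right i := by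
    simpa using period_conj_smul z.right x.right i
  rw [cycleProduct, hperiod, conj_pow, conj_left_apply, right_pow, inv_smul_eq_iff.mpr
    (pow_period_smul x.right i).symm]
  rfl

noncomputable def cycleClasses (x : Wreath X H) (i : ι) : ConjClasses X :=
  ConjClasses.mk (cycleProduct x i)

lemma cycleClasses_conj (z x : Wreath X H) :
    cycleClasses (z * x * z⁻¹) = z.right • cycleClasses x := by
  funext i
  have := cycleProduct_conj z x (z.right⁻¹ • i)
  rw [smul_inv_smul] at this
  exact ConjClasses.mk_eq_mk_iff_isConj.mpr (isConj_iff.mpr ⟨z.left i, this.symm⟩).symm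

lemma smul_cycleClasses_self (x : Wreath X H) : x.right • cycleClasses x = cycleClasses x := by
  simpa using (cycleClasses_conj x x).symm

-- `c` at the base point is placed at the last point of the cycle, so that it is the last factor
-- of the cycle product at the base point.
open scoped Classical in
noncomputable def normalForm (h : H) (c : ι → X) : Wreath X H :=
  ⟨fun i => if h⁻¹ • i = cycleBase h⁻¹ i then c (cycleBase h⁻¹ i) else 1, h⟩

lemma normalForm_conj (h : H) (c d : ι → X) :
    inl (fun i => d (cycleBase h⁻¹ i)) * normalForm h c * (inl fun i => d (cycleBase h⁻¹ i))⁻¹ =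
      normalForm h fun i => d i * c i * (d i)⁻¹ := by
  rw [inl_mul_mul_inv]
  refine SemidirectProduct.ext (funext fun i => ?_) rfl
  simp only [normalForm, cycleBase_smul]
  split_ifs <;> group

variable [Finite ι]

lemma isConj_normalForm (x : Wreath X H) : IsConj x (normalForm x.right (cycleProduct x)) := by
  -- `u i` is the product of the coordinates of `x` along the cycle from its base point up to,
  -- but excluding, `i`.
  set u : ι → X := fun i => (x ^ cyclePos x.right⁻¹ i).left (cycleBase x.right⁻¹ i)
  have hstep (i : ι) :
      (x ^ (cyclePos x.right⁻¹ i + 1)).left (cycleBase x.right⁻¹ i) = u i * x.left i := by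
    rw [left_pow_succ_apply, pow_cyclePos_smul]
  refine isConj_iff.mpr ⟨inl u, ?_⟩
  rw [inl_mul_mul_inv]
  refine SemidirectProduct.ext (funext fun i => ?_) rfl
  simp only [normalForm]
  split_ifs with hi
  · have hu : u (x.right⁻¹ • i) = 1 := by
      simp only [u]
      rw [hi, cycleBase_cycleBase, cyclePos_cycleBase, pow_zero]
      rfl
    rw [hu, inv_one, mul_one, ← hstep, cyclePos_add_one_of_eq hi, period_inv, cycleProduct]
  · have hu : u (x.right⁻¹ • i) = u i * x.left i := by
      simp only [u]
      rw [cyclePos_smul_of_ne hi, cycleBase_smul, hstep]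
    rw [hu, mul_inv_cancel]

lemma cycleProduct_normalForm (h : H) (c : ι → X) (i : ι) :
    cycleProduct (normalForm h c) (cycleBase h⁻¹ i) = c (cycleBase h⁻¹ i) := by
  classical
  set b := cycleBase h⁻¹ i
  set x := normalForm h c
  have hr : x.right = h := rfl
  have hfactor (k : ℕ) : x.left (h⁻¹ ^ k • b) = if h⁻¹ ^ (k + 1) • b = b then c b else 1 := by
    show (if h⁻¹ • h⁻¹ ^ k • b = cycleBase h⁻¹ (h⁻¹ ^ k • b)
      then c (cycleBase h⁻¹ (h⁻¹ ^ k • b)) else 1) = _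
    rw [cycleBase_pow_smul, cycleBase_cycleBase, ← mul_smul, ← pow_succ']
  have hone (k : ℕ) (hk : k < period h b) : (x ^ k).left b = 1 := by
    induction k with
    | zero => rfl
    | succ k ih =>
      rw [left_pow_succ_apply, ih (by omega), hr, hfactor, if_neg, mul_one]
      intro hfix
      have := period_le_of_fixed (Nat.succ_pos k) hfix
      rw [period_inv] at this
      omega
  obtain ⟨m, hm⟩ := Nat.exists_eq_succ_of_ne_zero
    (period_pos_of_orderOf_pos (orderOf_pos h) b).ne'
  rw [cycleProduct, hr, hm, left_pow_succ_apply, hone m (by omega), one_mul, hr, hfactor, if_pos]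
  rw [← Nat.succ_eq_add_one, ← hm, ← period_inv, pow_period_smul]

lemma exists_cycleClasses_eq {h : H} {F : ι → ConjClasses X} (hF : h • F = F) :
    ∃ x : Wreath X H, x.right = h ∧ cycleClasses x = F := by
  choose c hc using fun i => ConjClasses.exists_rep (F i)
  refine ⟨normalForm h c, rfl, funext fun i => ?_⟩
  have hx := smul_cycleClasses_self (normalForm h c)
  calc cycleClasses (normalForm h c) i
      = cycleClasses (normalForm h c) (cycleBase h⁻¹ i) :=
        (apply_cycleBase (fun j => congrFun hx j) i).symm
    _ = F (cycleBase h⁻¹ i) := by rw [cycleClasses, cycleProduct_normalForm, hc]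
    _ = F i := apply_cycleBase (g := h⁻¹) (fun j => congrFun hF j) i

lemma isConj_of_cycleClasses_eq {x y : Wreath X H} (hr : x.right = y.right)
    (hc : cycleClasses x = cycleClasses y) : IsConj x y := by
  choose d hd using fun i =>
    isConj_iff.mp (ConjClasses.mk_eq_mk_iff_isConj.mp (congrFun hc i))
  have hxy : IsConj (normalForm x.right (cycleProduct x)) (normalForm y.right (cycleProduct y)) := by
    rw [← hr, ← funext hd]
    exact isConj_iff.mpr ⟨_, normalForm_conj x.right _ d⟩
  exact (isConj_normalForm x).trans (hxy.trans (isConj_normalForm y).symm)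

lemma card_conjClasses_eq_card_orbits_fixingPair :
    Nat.card (ConjClasses (Wreath X H)) =
      Nat.card (orbitRel.Quotient H (FixingPair H (ι → ConjClasses X))) := by
  refine card_conjClasses_eq_card_orbits (φ := rightHom) rightHom_surjective
    (F := fun x => ⟨(cycleClasses x, x.right), smul_cycleClasses_self x⟩)
    (fun z x => Subtype.ext (Prod.ext (cycleClasses_conj z x) ?_)) (fun p => ?_)
    (fun x y hxy => isConj_of_cycleClasses_eq (congrArg (·.1.2) hxy) (congrArg (·.1.1) hxy))
  · show (z * x * z⁻¹).right = z.right * x.right * z.right⁻¹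
    simp
  · obtain ⟨x, hr, hc⟩ := exists_cycleClasses_eq p.2
    exact ⟨x, Subtype.ext (Prod.ext hc hr)⟩

end Wreath

theorem statement1_general (n : ℕ) (X : Type) [Group X]
    (H : Subgroup (Perm (Fin n))) (f : ℕ)
    (reps : Fin f → (Fin n → ConjClasses X))
    (hreps : Function.Bijective fun i : Fin f =>
      (Quotient.mk'' (reps i) : orbitRel.Quotient H (Fin n → ConjClasses X))) :
    kclass (Wreath X H) = ∑ i : Fin f, kclass (MulAction.stabilizer H (reps i)) :=
  Wreath.card_conjClasses_eq_card_orbits_fixingPair.trans (card_orbits_fixingPair hreps)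

/-- `k(X ≀ H)` is the sum, over representatives of the orbits of `H` on
`Irr(X)^n ≃ (ConjClasses X)^n`, of the class numbers of the inertia (stabilizer) groups. -/
theorem statement1 (n : ℕ) (X : Type) [Group X] [Finite X] [Nontrivial X]
    (H : Subgroup (Perm (Fin n))) (f : ℕ)
    (reps : Fin f → (Fin n → ConjClasses X))
    (hreps : Function.Bijective fun i : Fin f =>
      (Quotient.mk'' (reps i) : orbitRel.Quotient H (Fin n → ConjClasses X))) :
    kclass (Wreath X H) = ∑ i : Fin f, kclass (MulAction.stabilizer H (reps i)) :=
  statement1_general n X H f reps hreps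
end

section
/- Let X be a nontrivial finite group with k := k(X) conjugacy classes, let H ≤ Sym({1,…,n}) be any permutation group, and let G = X ≀ H. Then k(G) ≥ k^n / |H|. -/
open Equiv MulAction

-- Finite instance for SemidirectProduct
instance semidirect_finite {N G : Type*} [Group N] [Group G] (φ : G →* MulAut N)
    [Finite N] [Finite G] : Finite (SemidirectProduct N G φ) :=
  Finite.of_injective (fun x => (x.left, x.right)) (fun a b h => by
    obtain ⟨h1, h2⟩ := Prod.mk.injEq .. ▸ h
    exact SemidirectProduct.ext h1 h2)

lemma conj_map_mk {α β : Type*} [Monoid α] [Monoid β] (f : α →* β) (a : α) :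
    ConjClasses.map f (ConjClasses.mk a) = ConjClasses.mk (f a) := rfl

/-- componentwise map on conjugacy classes of a Pi group -/
noncomputable def piConjMap {ι : Type*} (X : ι → Type*) [∀ i, Group (X i)] :
    ConjClasses (∀ i, X i) → ∀ i, ConjClasses (X i) :=
  Quotient.lift (fun f i => ConjClasses.mk (f i)) (by
    intro f g h
    funext i
    obtain ⟨c, hc⟩ := isConj_iff.1 h
    exact ConjClasses.mk_eq_mk_iff_isConj.2 (isConj_iff.2 ⟨c i, congrFun hc i⟩))

lemma piConjMap_bijective {ι : Type*} (X : ι → Type*) [∀ i, Group (X i)] :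
    Function.Bijective (piConjMap X) := by
  constructor
  · intro a b hab
    obtain ⟨f, rfl⟩ := ConjClasses.exists_rep a
    obtain ⟨g, rfl⟩ := ConjClasses.exists_rep b
    have : ∀ i, IsConj (f i) (g i) := fun i =>
      ConjClasses.mk_eq_mk_iff_isConj.1 (congrFun hab i)
    choose c hc using fun i => isConj_iff.1 (this i)
    exact ConjClasses.mk_eq_mk_iff_isConj.2 (isConj_iff.2 ⟨c, funext hc⟩)
  · intro F
    choose f hf using fun i => ConjClasses.exists_rep (F i)
    exact ⟨ConjClasses.mk f, funext hf⟩

lemma card_le_mul_of_fibers {α β : Type*} [Finite α] [Finite β] (f : α → β) (m : ℕ)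
    (hm : ∀ b, Nat.card {a // f a = b} ≤ m) : Nat.card α ≤ m * Nat.card β := by
  classical
  have : Fintype β := Fintype.ofFinite β
  calc Nat.card α = Nat.card (Σ b, {a // f a = b}) :=
        Nat.card_congr (Equiv.sigmaFiberEquiv f).symm
    _ = ∑ b, Nat.card {a // f a = b} := by
        have : Fintype α := Fintype.ofFinite α
        simp [Nat.card_eq_fintype_card, Fintype.card_sigma]
    _ ≤ ∑ _b : β, m := Finset.sum_le_sum (fun b _ => hm b)
    _ = Nat.card β * m := by simp [Nat.card_eq_fintype_card, Finset.sum_const, mul_comm]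
    _ = m * Nat.card β := mul_comm _ _

section fiber
variable {N G : Type*} [Group N] [Group G] (φ : G →* MulAut N) [Finite N] [Finite G]

open SemidirectProduct in
omit [Finite N] in
lemma fiber_card_le (d : ConjClasses (SemidirectProduct N G φ)) :
    Nat.card {c : ConjClasses N // ConjClasses.map (inl (φ := φ)) c = d} ≤ Nat.card G := by
  by_cases hne : Nonempty {c : ConjClasses N // ConjClasses.map (inl (φ := φ)) c = d}
  · obtain ⟨⟨c₀, hc₀⟩⟩ := hne
    obtain ⟨a₀, rfl⟩ := ConjClasses.exists_rep c₀
    have key : ∀ h : G, ConjClasses.map (inl (φ := φ)) (ConjClasses.mk (φ h a₀)) = d := by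
      intro h
      rw [conj_map_mk, ← hc₀, conj_map_mk]
      refine (ConjClasses.mk_eq_mk_iff_isConj.2 (isConj_iff.2 ⟨inr h, ?_⟩)).symm
      rw [← map_inv, ← inl_aut]
    refine Nat.card_le_card_of_surjective
      (fun h : G => (⟨ConjClasses.mk (φ h a₀), key h⟩ :
        {c : ConjClasses N // ConjClasses.map (inl (φ := φ)) c = d})) ?_
    rintro ⟨c, hc⟩
    obtain ⟨b, rfl⟩ := ConjClasses.exists_rep c
    rw [← hc₀] at hc
    have hconj : IsConj (inl (φ := φ) a₀) (inl b) :=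
      ConjClasses.mk_eq_mk_iff_isConj.1 hc.symm
    obtain ⟨g, hg⟩ := isConj_iff.1 hconj
    have hg' : inl (g.left * φ g.right a₀ * g.left⁻¹) = inl (φ := φ) b := by
      rw [← hg]
      conv_rhs => rw [← inl_left_mul_inr_right g]
      rw [mul_inv_rev, ← map_inv, ← map_inv, map_mul, map_mul, inl_aut]
      simp only [mul_assoc]
    have hb : b = g.left * φ g.right a₀ * g.left⁻¹ := (inl_injective hg').symm
    refine ⟨g.right, Subtype.ext ?_⟩
    exact ConjClasses.mk_eq_mk_iff_isConj.2 (isConj_iff.2 ⟨g.left, hb.symm⟩)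
  · have := not_nonempty_iff.1 hne
    simp [Nat.card_of_isEmpty]

end fiber

/-- For any permutation group `H` of degree `n` and any nontrivial finite group `X` with
`k` conjugacy classes, `k(X ≀ H) ≥ k^n / |H|`. -/
theorem statement3 (n : ℕ) (X : Type) [Group X] [Finite X] [Nontrivial X]
    (H : Subgroup (Perm (Fin n))) :
    (kclass X : ℝ) ^ n / (Nat.card H : ℝ) ≤ (kclass (Wreath X H) : ℝ) := by
  have hH : (0 : ℝ) < (Nat.card H : ℝ) := by
    exact_mod_cast Nat.card_pos
  rw [div_le_iff₀ hH]
  have h1 : Nat.card (ConjClasses (Fin n → X)) = kclass X ^ n := by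
    rw [Nat.card_eq_of_bijective _ (piConjMap_bijective (fun _ : Fin n => X)),
      Nat.card_fun, show Nat.card (Fin n) = n by simp]
    rfl
  have h2 : Nat.card (ConjClasses (Fin n → X)) ≤ Nat.card H * kclass (Wreath X H) :=
    card_le_mul_of_fibers (ConjClasses.map
      (SemidirectProduct.inl (φ := (permAut (Fin n) X).comp H.subtype))) _
      (fiber_card_le _)
  rw [h1] at h2
  exact_mod_cast (mul_comm (Nat.card H) (kclass (Wreath X H)) ▸ h2)
end

section
/- Let S be a finite set with |S| = k ≥ 2 and let H ≤ Sym({1,…,n}) be a nontrivial permutation group acting on the set S^n of functions {1,…,n} → S by permuting coordinates. Then the number of non-regular orbits of H on S^n (orbits of size strictly less than |H|) is strictly less than 2·k^{α(H)·n}, where α(H) := max_{1≠h∈H} σ(h)/n. -/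
open Equiv MulAction

/-! Count the pairs `(h, x)` with `h ≠ 1` and `h • x = x`. By Burnside's lemma there are
`∑ (|H| - |O|)` of them, summed over the orbits `O`; since `|O|` divides `|H|`, every
non-regular orbit contributes at least `|H| / 2`. On the other hand `h` fixes exactly the
functions constant on its cycles, `k ^ σ(h) ≤ k ^ (α n)` of them, so there are at most
`(|H| - 1) k ^ (α n)` pairs. -/

namespace MulAction

section NonregularOrbits

variable {G X : Type*} [Group G] [MulAction G X]

theorem card_orbit_dvd_card (ω : orbitRel.Quotient G X) : Nat.card ω.orbit ∣ Nat.card G := by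
  induction ω using Quotient.inductionOn' with
  | h x =>
    rw [orbitRel.Quotient.orbit_mk, Nat.card_congr (orbitEquivQuotientStabilizer G x)]
    exact (stabilizer G x).index_dvd_card

theorem two_mul_card_orbit_le_of_lt [Finite G] {ω : orbitRel.Quotient G X}
    (h : Nat.card ω.orbit < Nat.card G) : 2 * Nat.card ω.orbit ≤ Nat.card G := by
  obtain ⟨c, hc⟩ := card_orbit_dvd_card ω
  have hpos : 0 < Nat.card G := Nat.card_pos
  rcases c with _ | _ | c
  · omega
  · omega
  · rw [hc]; nlinarith

theorem card_eq_sum_card_orbit [Finite X] [Fintype (orbitRel.Quotient G X)] :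
    Nat.card X = ∑ ω : orbitRel.Quotient G X, Nat.card ω.orbit := by
  rw [Nat.card_congr (selfEquivSigmaOrbits' G X), Nat.card_sigma]

theorem sum_card_fixedBy_ne_one_eq [Fintype G] [DecidableEq G] [Finite X]
    [Fintype (orbitRel.Quotient G X)] :
    ∑ g ∈ Finset.univ.erase (1 : G), Nat.card (fixedBy X g) =
      ∑ ω : orbitRel.Quotient G X, (Nat.card G - Nat.card ω.orbit) := by
  classical
  have : Fintype X := Fintype.ofFinite X
  have burnside : ∑ g : G, Nat.card (fixedBy X g) =
      Nat.card (orbitRel.Quotient G X) * Nat.card G := by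
    simpa only [← Nat.card_eq_fintype_card] using
      sum_card_fixedBy_eq_card_orbits_mul_card_group G X
  rw [← Finset.add_sum_erase _ _ (Finset.mem_univ 1), fixedBy_one_eq_univ, Nat.card_univ]
    at burnside
  rw [Finset.sum_tsub_distrib _ fun ω _ => Nat.le_of_dvd Nat.card_pos (card_orbit_dvd_card ω),
    ← card_eq_sum_card_orbit, Finset.sum_const, Finset.card_univ, smul_eq_mul,
    ← Nat.card_eq_fintype_card]
  omega

theorem card_nonregular_orbits_mul_card_le [Fintype G] [DecidableEq G] [Finite X] :
    Nat.card {ω : orbitRel.Quotient G X // Nat.card ω.orbit < Nat.card G} * Nat.card G ≤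
      2 * ∑ g ∈ Finset.univ.erase (1 : G), Nat.card (fixedBy X g) := by
  classical
  have : Fintype (orbitRel.Quotient G X) := Fintype.ofFinite _
  rw [sum_card_fixedBy_ne_one_eq, Nat.card_eq_fintype_card, Fintype.card_subtype,
    Finset.card_eq_sum_ones, Finset.sum_mul, Finset.sum_filter, Finset.mul_sum]
  refine Finset.sum_le_sum fun ω _ => ?_
  split_ifs with h
  · have := two_mul_card_orbit_le_of_lt h
    omega
  · exact Nat.zero_le _

end NonregularOrbits

section FixedFunctions

variable {G Ω : Type*} [Group G] [MulAction G Ω] {S : Type*}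

theorem smul_fun_apply (g : G) (x : Ω → S) (ω : Ω) : (g • x) ω = x (g⁻¹ • ω) := rfl

theorem smul_fun_eq_self_iff {g : G} {x : Ω → S} : g • x = x ↔ ∀ ω, x (g • ω) = x ω := by
  refine ⟨fun hx ω => ?_, fun hx => funext fun ω => ?_⟩
  · simpa [smul_fun_apply] using (congrFun hx (g • ω)).symm
  · simpa [smul_fun_apply] using (hx (g⁻¹ • ω)).symm

variable (S)

def fixedByFunEquiv (g : G) :
    fixedBy (Ω → S) g ≃ (orbitRel.Quotient (Subgroup.zpowers g) Ω → S) where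
  toFun x := Quotient.lift x.1 <| by
    rintro a b ⟨⟨k, hk⟩, rfl⟩
    have hstab : Subgroup.zpowers g ≤ stabilizer G x.1 := Subgroup.zpowers_le.mpr x.2
    exact smul_fun_eq_self_iff.mp (hstab hk) b
  invFun f := ⟨fun ω => f (Quotient.mk'' ω), smul_fun_eq_self_iff.mpr fun ω =>
    congrArg f (Quotient.sound ⟨⟨g, Subgroup.mem_zpowers g⟩, rfl⟩)⟩
  left_inv _ := rfl
  right_inv f := funext fun q => by induction q using Quotient.inductionOn'; rfl

theorem card_fixedBy_fun [Finite Ω] (g : G) :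
    Nat.card (fixedBy (Ω → S) g) =
      Nat.card S ^ Nat.card (orbitRel.Quotient (Subgroup.zpowers g) Ω) := by
  rw [Nat.card_congr (fixedByFunEquiv S g), Nat.card_fun]

end FixedFunctions

end MulAction

theorem card_fixedBy_fun_eq_pow_cycleCount {ι : Type*} [Finite ι] (S : Type*) (σ : Perm ι) :
    Nat.card (fixedBy (ι → S) σ) = Nat.card S ^ cycleCount σ :=
  card_fixedBy_fun S σ

theorem statement4_general (n k : ℕ) (hk : 2 ≤ k) (S : Type) [Finite S] (hS : Nat.card S = k)
    (H : Subgroup (Perm (Fin n))) (α : ℝ)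
    (hα : IsGreatest
      {a : ℝ | ∃ h : H, h ≠ 1 ∧ a = (cycleCount (h : Perm (Fin n)) : ℝ) / n} α) :
    (Nat.card {q : orbitRel.Quotient H (Fin n → S) //
        Nat.card q.orbit < Nat.card H} : ℝ) < 2 * (k : ℝ) ^ (α * n) := by
  classical
  have : Fintype H := Fintype.ofFinite H
  obtain ⟨⟨h₀, hh₀, -⟩, hα_max⟩ := hα
  have hn : (0 : ℝ) < n := by
    rcases Nat.eq_zero_or_pos n with rfl | hn
    · exact absurd (Subtype.ext (Subsingleton.elim _ _)) hh₀
    · exact_mod_cast hn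
  have hfix : ∀ h ∈ Finset.univ.erase (1 : H),
      (Nat.card (fixedBy (Fin n → S) h) : ℝ) ≤ (k : ℝ) ^ (α * n) := by
    intro h hh
    have hσ : (cycleCount (h : Perm (Fin n)) : ℝ) ≤ α * n :=
      (div_le_iff₀ hn).mp (hα_max ⟨h, Finset.ne_of_mem_erase hh, rfl⟩)
    rw [show fixedBy (Fin n → S) h = fixedBy (Fin n → S) (h : Perm (Fin n)) from rfl,
      card_fixedBy_fun_eq_pow_cycleCount, hS, Nat.cast_pow, ← Real.rpow_natCast]
    exact Real.rpow_le_rpow_of_exponent_le (by exact_mod_cast (by omega : 1 ≤ k)) hσ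
  have hsum := Finset.sum_le_card_nsmul _ _ _ hfix
  rw [Finset.card_erase_of_mem (Finset.mem_univ 1), Finset.card_univ, ← Nat.card_eq_fintype_card,
    nsmul_eq_mul] at hsum
  have hcount := card_nonregular_orbits_mul_card_le (G := H) (X := Fin n → S)
  have hH : 1 ≤ Nat.card H := Nat.card_pos
  have hK : 0 < (k : ℝ) ^ (α * n) := by positivity
  rw [← Nat.cast_le (α := ℝ)] at hcount
  push_cast [hH] at hcount hsum
  nlinarith

/-- The number of non-regular orbits of a nontrivial `H ≤ Sym(n)` on `S^n` is less than
`2 k^{α(H) n}`, where `k = |S| ≥ 2` and `α(H) = max_{1 ≠ h ∈ H} σ(h)/n`. -/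
theorem statement4 (n k : ℕ) (hk : 2 ≤ k) (S : Type) [Finite S] (hS : Nat.card S = k)
    (H : Subgroup (Perm (Fin n))) [Nontrivial H] (α : ℝ)
    (hα : IsGreatest
      {a : ℝ | ∃ h : H, h ≠ 1 ∧ a = (cycleCount (h : Perm (Fin n)) : ℝ) / n} α) :
    (Nat.card {q : orbitRel.Quotient H (Fin n → S) //
        Nat.card q.orbit < Nat.card H} : ℝ) < 2 * (k : ℝ) ^ (α * n) :=
  statement4_general n k hk S hS H α hα
end

section
/- Let X be a nontrivial finite group with k := k(X) conjugacy classes, let H ≤ Sym({1,…,n}) be a nontrivial permutation group, and let G = X ≀ H. Let e denote the maximum of k(T) over all subgroups T of H, and let α(H) := max_{1≠h∈H} σ(h)/n. Then k(G) < k^n/|H| + 2·e·k^{α(H)·n}. -/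
open Equiv MulAction

/-!
Sort the conjugacy classes of `X ≀ H` by their image among the classes of `H`. Over the
identity lie the classes of the base group `X^n` up to the action of `H`; they inject into the
`H`-orbits on `(ConjClasses X)^n`, whose number is `k^n / |H| + (1/|H|) ∑_{h ≠ 1} k^{σ(h)}` by
Burnside's lemma, hence less than `k^n / |H| + k^{α n}`. A class over the class of `h ≠ 1`
contains some `(f, h)`, and conjugating by the base group pushes the values of `f` along each
cycle of `h` onto one point of the cycle, where only their conjugacy class matters: there are at
most `k^{σ(h)} ≤ k^{α n}` such classes. With `k(H) ≤ e` classes of `H` this gives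
`k(X ≀ H) < k^n / |H| + e k^{α n}`.
-/

lemma kclass_congr {A B : Type*} [Group A] [Group B] (e : A ≃* B) : kclass A = kclass B :=
  Nat.card_congr
    { toFun := ConjClasses.map e.toMonoidHom
      invFun := ConjClasses.map e.symm.toMonoidHom
      left_inv := fun c => by
        obtain ⟨a, rfl⟩ := ConjClasses.mk_surjective c
        exact congrArg ConjClasses.mk (e.symm_apply_apply a)
      right_inv := fun c => by
        obtain ⟨b, rfl⟩ := ConjClasses.mk_surjective c
        exact congrArg ConjClasses.mk (e.apply_symm_apply b) }

lemma sum_le_apply_add_card_sub_one_mul {α : Type*} [Fintype α] (f : α → ℝ) (a : α) {K : ℝ}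
    (hK : ∀ b ≠ a, f b ≤ K) : ∑ b, f b ≤ f a + (Fintype.card α - 1) * K := by
  classical
  rw [← Finset.add_sum_erase _ _ (Finset.mem_univ a)]
  gcongr
  calc ∑ b ∈ Finset.univ.erase a, f b ≤ ∑ _b ∈ Finset.univ.erase a, K :=
        Finset.sum_le_sum fun b hb => hK b (Finset.ne_of_mem_erase hb)
    _ = (Fintype.card α - 1) * K := by
        rw [Finset.sum_const, Finset.card_erase_of_mem (Finset.mem_univ a), Finset.card_univ,
          nsmul_eq_mul, Nat.cast_sub (Fintype.card_pos_iff.mpr ⟨a⟩), Nat.cast_one]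

lemma card_le_card_fiber_add_mul {A B : Type*} [Finite A] [Finite B] (φ : A → B) (b₀ : B)
    {K : ℝ} (hK : ∀ b ≠ b₀, (Nat.card {a // φ a = b} : ℝ) ≤ K) :
    (Nat.card A : ℝ) ≤ Nat.card {a // φ a = b₀} + (Nat.card B - 1) * K := by
  have := Fintype.ofFinite B
  rw [Nat.card_congr (Equiv.sigmaFiberEquiv φ).symm, Nat.card_sigma, Nat.cast_sum,
    Nat.card_eq_fintype_card (α := B)]
  exact sum_le_apply_add_card_sub_one_mul _ b₀ hK

lemma sum_card_fixedBy_eq_orbitCount_mul_card (G Ω : Type*) [Group G] [MulAction G Ω] [Fintype G]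
    [Finite Ω] : ∑ g : G, Nat.card (fixedBy Ω g) = orbitCount G Ω * Nat.card G := by
  rw [← Nat.card_sigma, Nat.card_congr (sigmaFixedByEquivOrbitsProdGroup G Ω), Nat.card_prod,
    orbitCount]

section CycleNormalForm

variable {ι : Type*} (P : Perm ι)

noncomputable def cycleRep (i : ι) : ι :=
  (Quotient.mk'' i : orbitRel.Quotient (Subgroup.zpowers P) ι).out

lemma mk_inv_apply (i : ι) :
    (Quotient.mk'' (P⁻¹ i) : orbitRel.Quotient (Subgroup.zpowers P) ι) = Quotient.mk'' i :=
  Quotient.sound' ⟨⟨P⁻¹, Subgroup.inv_mem _ (Subgroup.mem_zpowers P)⟩, rfl⟩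

lemma cycleRep_inv_apply (i : ι) : cycleRep P (P⁻¹ i) = cycleRep P i := by
  rw [cycleRep, cycleRep, mk_inv_apply]

lemma exists_pow_apply_cycleRep [Finite ι] (i : ι) : ∃ m : ℕ, (P ^ m) (cycleRep P i) = i := by
  obtain ⟨⟨p, hp⟩, hpi⟩ := orbitRel_apply.mp (Quotient.exact' (Quotient.out_eq' (Quotient.mk'' i :
    orbitRel.Quotient (Subgroup.zpowers P) ι)))
  obtain ⟨z, rfl⟩ := Subgroup.mem_zpowers_iff.mp hp
  exact (Perm.SameCycle.symm ⟨z, hpi⟩).exists_nat_pow_eq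

open Classical in
noncomputable def cycleDist [Finite ι] (i : ι) : ℕ := Nat.find (exists_pow_apply_cycleRep P i)

variable [Finite ι]

lemma pow_cycleDist_apply_cycleRep (i : ι) : (P ^ cycleDist P i) (cycleRep P i) = i := by
  classical exact Nat.find_spec (exists_pow_apply_cycleRep P i)

lemma cycleDist_eq_zero_iff (i : ι) : cycleDist P i = 0 ↔ cycleRep P i = i := by
  classical
  rw [cycleDist, Nat.find_eq_zero, pow_zero, Perm.one_apply]

lemma cycleDist_inv_apply_add_one {i : ι} (hi : cycleRep P i ≠ i) :
    cycleDist P (P⁻¹ i) + 1 = cycleDist P i := by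
  classical
  have hstep : ∀ {m : ℕ},
      (P ^ m) (cycleRep P (P⁻¹ i)) = P⁻¹ i ↔ (P ^ (m + 1)) (cycleRep P i) = i := by
    intro m
    rw [cycleRep_inv_apply, pow_succ', Perm.mul_apply, Perm.eq_inv_iff_eq]
  unfold cycleDist
  rw [Nat.find_comp_succ (exists_pow_apply_cycleRep P i)
    ⟨_, hstep.mp (pow_cycleDist_apply_cycleRep P _)⟩ (by simpa using hi), Nat.find_congr' hstep]

variable {X : Type*} [Group X]

/-- `pathProdInv P f m i = (f i * f (P⁻¹ i) * ⋯ * f (P⁻¹ ^ (m - 1) i))⁻¹`. -/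
def pathProdInv (f : ι → X) : ℕ → ι → X
  | 0, _ => 1
  | m + 1, i => pathProdInv f m (P⁻¹ i) * (f i)⁻¹

noncomputable def straightener (f : ι → X) (i : ι) : X :=
  pathProdInv P f (cycleDist P i) i

lemma straightener_of_cycleRep_eq (f : ι → X) {i : ι} (hi : cycleRep P i = i) :
    straightener P f i = 1 := by
  rw [straightener, (cycleDist_eq_zero_iff P i).mpr hi, pathProdInv]

lemma straightener_mul_mul_inv_of_cycleRep_ne (f : ι → X) {i : ι} (hi : cycleRep P i ≠ i) :
    straightener P f i * f i * (straightener P f (P⁻¹ i))⁻¹ = 1 := by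
  rw [straightener, ← cycleDist_inv_apply_add_one P hi, pathProdInv, straightener]
  group

open Classical in
noncomputable def cycleNormalForm
    (φ : orbitRel.Quotient (Subgroup.zpowers P) ι → ConjClasses X) (i : ι) : X :=
  if cycleRep P i = i then (φ (Quotient.mk'' i)).out else 1

theorem exists_mul_mul_inv_comp_eq_cycleNormalForm (f : ι → X) :
    ∃ φ, ∃ g : ι → X, ∀ i, g i * f i * (g (P⁻¹ i))⁻¹ = cycleNormalForm P φ i := by
  set s := straightener P f
  let cycleProd (q : orbitRel.Quotient (Subgroup.zpowers P) ι) : X :=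
    f q.out * (s (P⁻¹ q.out))⁻¹
  choose c hc using fun q => isConj_iff.mp (ConjClasses.mk_eq_mk_iff_isConj.mp
    (Quotient.out_eq' (ConjClasses.mk (cycleProd q))).symm)
  refine ⟨fun q => ConjClasses.mk (cycleProd q), fun i => c (Quotient.mk'' i) * s i, fun i => ?_⟩
  simp only [mk_inv_apply, cycleNormalForm]
  split_ifs with hi
  · rw [← hc]
    change _ = _ * (f (cycleRep P i) * (s (P⁻¹ (cycleRep P i)))⁻¹) * _
    rw [hi, show s i = 1 from straightener_of_cycleRep_eq P f hi]
    group
  · calc c (Quotient.mk'' i) * s i * f i * (c (Quotient.mk'' i) * s (P⁻¹ i))⁻¹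
        = c (Quotient.mk'' i) * (s i * f i * (s (P⁻¹ i))⁻¹) * (c (Quotient.mk'' i))⁻¹ := by group
      _ = 1 := by rw [straightener_mul_mul_inv_of_cycleRep_ne P f hi]; group

end CycleNormalForm

section FixedPoints

variable {ι : Type*} (P : Perm ι) (S : Type*)

lemma apply_eq_of_mem_fixedBy {F : ι → S} (hF : F ∈ fixedBy (ι → S) P) {i j : ι}
    (hij : (Quotient.mk'' i : orbitRel.Quotient (Subgroup.zpowers P) ι) = Quotient.mk'' j) :
    F i = F j := by
  obtain ⟨p, rfl⟩ := orbitRel_apply.mp (Quotient.exact' hij)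
  have hpF : (p : Perm ι) • F = F :=
    Subgroup.zpowers_le.mpr (show P ∈ stabilizer (Perm ι) F from hF) p.2
  calc F (p • j) = ((p : Perm ι) • F) (p • j) := by rw [hpF]
    _ = F j := congrArg F (inv_smul_smul (p : Perm ι) j)

noncomputable def fixedByEquivCycleFun :
    fixedBy (ι → S) P ≃ (orbitRel.Quotient (Subgroup.zpowers P) ι → S) where
  toFun F q := F.1 q.out
  invFun u := ⟨fun i => u (Quotient.mk'' i), funext fun i =>
    congrArg u (mk_inv_apply P i)⟩
  left_inv F := Subtype.ext <| funext fun _ => apply_eq_of_mem_fixedBy P S F.2 (Quotient.out_eq' _)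
  right_inv u := funext fun q => congrArg u (Quotient.out_eq' q)

lemma card_fixedBy_fun [Finite ι] : Nat.card (fixedBy (ι → S) P) = Nat.card S ^ cycleCount P := by
  rw [Nat.card_congr (fixedByEquivCycleFun P S), Nat.card_fun, cycleCount]

end FixedPoints

section Wreath

open SemidirectProduct

variable {X : Type*} [Group X] {ι : Type*} {H : Subgroup (Perm ι)}

instance [Finite X] [Finite ι] : Finite (Wreath X H) :=
  Finite.of_equiv _ equivProd.symm

lemma inl_mul_mk_mul_inl_inv (g f : ι → X) (h : H) :
    (inl g : Wreath X H) * ⟨f, h⟩ * (inl g)⁻¹ =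
      ⟨fun i => g i * f i * (g ((h : Perm ι)⁻¹ i))⁻¹, h⟩ := by
  ext i <;> rfl

lemma exists_mk_eq_of_map_eq {C : ConjClasses (Wreath X H)} {h : H}
    (hC : ConjClasses.map rightHom C = ConjClasses.mk h) :
    ∃ f, ConjClasses.mk (⟨f, h⟩ : Wreath X H) = C := by
  obtain ⟨x, rfl⟩ := ConjClasses.mk_surjective C
  obtain ⟨t, rfl⟩ := isConj_iff.mp (ConjClasses.mk_eq_mk_iff_isConj.mp hC)
  refine ⟨(inr t * x * (inr t)⁻¹).left, (ConjClasses.mk_eq_mk_iff_isConj.mpr ?_).symm⟩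
  exact isConj_iff.mpr ⟨inr t, SemidirectProduct.ext rfl (by simp)⟩

lemma isConj_pi {f g : ι → X} (h : ∀ i, IsConj (f i) (g i)) : IsConj f g := by
  choose c hc using fun i => isConj_iff.mp (h i)
  exact isConj_iff.mpr ⟨c, funext hc⟩

lemma isConj_inl_of_mem_orbit {f₁ f₂ : ι → X}
    (hf : ConjClasses.mk ∘ f₁ ∈ orbit H (ConjClasses.mk ∘ f₂)) :
    IsConj (inl f₂ : Wreath X H) (inl f₁) := by
  obtain ⟨t, ht⟩ := hf
  have hperm : IsConj (inl f₂ : Wreath X H) (inl (f₂ ∘ (t : Perm ι).symm)) :=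
    isConj_iff.mpr ⟨inr t, by rw [← map_inv, ← inl_aut]; rfl⟩
  refine hperm.trans ((inl : _ →* Wreath X H).map_isConj (isConj_pi fun i => ?_))
  exact ConjClasses.mk_eq_mk_iff_isConj.mp (congrFun ht i)

variable (X) in
abbrev classesOver (c : ConjClasses H) : Type _ :=
  {C : ConjClasses (Wreath X H) // ConjClasses.map rightHom C = c}

lemma card_classesOver_one_le [Finite X] [Finite ι] :
    Nat.card (classesOver X (1 : ConjClasses H)) ≤ orbitCount H (ι → ConjClasses X) := by
  choose f hf using fun C : classesOver X (1 : ConjClasses H) =>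
    exists_mk_eq_of_map_eq (C.2.trans ConjClasses.one_eq_mk_one)
  refine Nat.card_le_card_of_injective (fun C => Quotient.mk'' (ConjClasses.mk ∘ f C))
    fun C₁ C₂ h12 => Subtype.ext ?_
  rw [← hf, ← hf]
  exact ConjClasses.mk_eq_mk_iff_isConj.mpr (isConj_inl_of_mem_orbit (Quotient.exact' h12)).symm

lemma card_classesOver_mk_le [Finite X] [Finite ι] (h : H) :
    Nat.card (classesOver X (ConjClasses.mk h)) ≤ kclass X ^ cycleCount (h : Perm ι) := by
  calc Nat.card (classesOver X (ConjClasses.mk h))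
      ≤ Nat.card (orbitRel.Quotient (Subgroup.zpowers (h : Perm ι)) ι → ConjClasses X) := by
        refine Nat.card_le_card_of_surjective
          (fun φ => ⟨ConjClasses.mk ⟨cycleNormalForm (h : Perm ι) φ, h⟩, rfl⟩) ?_
        rintro ⟨C, hC⟩
        obtain ⟨f, rfl⟩ := exists_mk_eq_of_map_eq hC
        obtain ⟨φ, g, hg⟩ := exists_mul_mul_inv_comp_eq_cycleNormalForm (h : Perm ι) f
        refine ⟨φ, Subtype.ext (ConjClasses.mk_eq_mk_iff_isConj.mpr ?_).symm⟩
        exact isConj_iff.mpr ⟨inl g, by rw [inl_mul_mk_mul_inl_inv]; simp only [hg]⟩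
    _ = kclass X ^ cycleCount (h : Perm ι) := by rw [Nat.card_fun, kclass, cycleCount]

end Wreath

section WreathBound

variable {X : Type*} [Group X] [Finite X] {ι : Type*} [Finite ι] {H : Subgroup (Perm ι)}
  {K : ℝ}

lemma orbitCount_lt (hK0 : 0 < K)
    (hK : ∀ h : H, h ≠ 1 → (kclass X : ℝ) ^ cycleCount (h : Perm ι) ≤ K) :
    (orbitCount H (ι → ConjClasses X) : ℝ) < (kclass X : ℝ) ^ Nat.card ι / Nat.card H + K := by
  have := Fintype.ofFinite H
  have hH : (0 : ℝ) < Nat.card H := by exact_mod_cast Nat.card_pos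
  have hfix (h : H) : Nat.card (fixedBy (ι → ConjClasses X) h) =
      kclass X ^ cycleCount (h : Perm ι) :=
    card_fixedBy_fun (h : Perm ι) (ConjClasses X)
  have burnside : (orbitCount H (ι → ConjClasses X) : ℝ) * Nat.card H ≤
      (kclass X : ℝ) ^ Nat.card ι + (Nat.card H - 1) * K := by
    calc (orbitCount H (ι → ConjClasses X) : ℝ) * Nat.card H
        = ∑ h : H, (Nat.card (fixedBy (ι → ConjClasses X) h) : ℝ) := by
          exact_mod_cast (sum_card_fixedBy_eq_orbitCount_mul_card H (ι → ConjClasses X)).symm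
      _ ≤ Nat.card (fixedBy (ι → ConjClasses X) (1 : H)) + (Fintype.card H - 1) * K :=
          sum_le_apply_add_card_sub_one_mul _ 1 fun h hh => by
            rw [hfix]; exact_mod_cast hK h hh
      _ = (kclass X : ℝ) ^ Nat.card ι + (Nat.card H - 1) * K := by
          rw [fixedBy_one_eq_univ, Nat.card_univ, Nat.card_fun, Nat.card_eq_fintype_card (α := H)]
          push_cast
          rfl
  rw [div_add' _ _ _ hH.ne', lt_div_iff₀ hH]
  linarith

theorem kclass_wreath_lt (hK0 : 0 < K)
    (hK : ∀ h : H, h ≠ 1 → (kclass X : ℝ) ^ cycleCount (h : Perm ι) ≤ K) :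
    (kclass (Wreath X H) : ℝ) < (kclass X : ℝ) ^ Nat.card ι / Nat.card H + kclass H * K := by
  have hfibers : (kclass (Wreath X H) : ℝ) ≤
      Nat.card (classesOver X (1 : ConjClasses H)) + (kclass H - 1) * K := by
    refine card_le_card_fiber_add_mul (ConjClasses.map SemidirectProduct.rightHom) 1 fun c hc => ?_
    obtain ⟨h, rfl⟩ := ConjClasses.mk_surjective c
    have hh : h ≠ 1 := by rintro rfl; exact hc ConjClasses.one_eq_mk_one.symm
    calc (Nat.card (classesOver X (ConjClasses.mk h)) : ℝ)
        ≤ (kclass X : ℝ) ^ cycleCount (h : Perm ι) := by exact_mod_cast card_classesOver_mk_le h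
      _ ≤ K := hK h hh
  have hfiber_one : (Nat.card (classesOver X (1 : ConjClasses H)) : ℝ) ≤
      orbitCount H (ι → ConjClasses X) := by exact_mod_cast card_classesOver_one_le
  linarith [orbitCount_lt hK0 hK]

end WreathBound

theorem statement5_general (n : ℕ) (X : Type) [Group X] [Finite X]
    (H : Subgroup (Perm (Fin n))) (α : ℝ) (e : ℕ)
    (hα : IsGreatest
      {a : ℝ | ∃ h : H, h ≠ 1 ∧ a = (cycleCount (h : Perm (Fin n)) : ℝ) / n} α)
    (he : IsGreatest {c : ℕ | ∃ T : Subgroup H, c = kclass T} e) :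
    (kclass (Wreath X H) : ℝ) <
      (kclass X : ℝ) ^ n / (Nat.card H : ℝ) + 2 * e * (kclass X : ℝ) ^ (α * n) := by
  have hk : (1 : ℝ) ≤ kclass X := by exact_mod_cast Nat.card_pos (α := ConjClasses X)
  have hK (h : H) (hh : h ≠ 1) :
      (kclass X : ℝ) ^ cycleCount (h : Perm (Fin n)) ≤ (kclass X : ℝ) ^ (α * n) := by
    have hn : (0 : ℝ) < n := by
      exact_mod_cast Nat.pos_of_ne_zero (by rintro rfl; exact hh (Subsingleton.elim _ _))
    rw [← Real.rpow_natCast]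
    exact Real.rpow_le_rpow_of_exponent_le hk ((div_le_iff₀ hn).mp (hα.2 ⟨h, hh, rfl⟩))
  have hHe : (kclass H : ℝ) ≤ e := by
    exact_mod_cast he.2 ⟨⊤, kclass_congr Subgroup.topEquiv.symm⟩
  calc (kclass (Wreath X H) : ℝ)
      < (kclass X : ℝ) ^ Nat.card (Fin n) / Nat.card H + kclass H * (kclass X : ℝ) ^ (α * n) :=
        kclass_wreath_lt (by positivity) hK
    _ ≤ (kclass X : ℝ) ^ n / Nat.card H + 2 * e * (kclass X : ℝ) ^ (α * n) := by
        rw [Nat.card_fin]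
        gcongr
        linarith [e.cast_nonneg (α := ℝ)]

/-- `k(X ≀ H) < k^n/|H| + 2 e k^{α(H) n}`, where `e` is the maximum of `k(T)` over the
subgroups `T ≤ H` and `α(H) = max_{1 ≠ h ∈ H} σ(h)/n`. -/
theorem statement5 (n : ℕ) (X : Type) [Group X] [Finite X] [Nontrivial X]
    (H : Subgroup (Perm (Fin n))) [Nontrivial H] (α : ℝ) (e : ℕ)
    (hα : IsGreatest
      {a : ℝ | ∃ h : H, h ≠ 1 ∧ a = (cycleCount (h : Perm (Fin n)) : ℝ) / n} α)
    (he : IsGreatest {c : ℕ | ∃ T : Subgroup H, c = kclass T} e) :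
    (kclass (Wreath X H) : ℝ) <
      (kclass X : ℝ) ^ n / (Nat.card H : ℝ) + 2 * e * (kclass X : ℝ) ^ (α * n) :=
  statement5_general n X H α e hα he
end

section
/- There exists a positive integer N such that for every m ≥ N and every integer j with j > 3m/4, the number S(j,m) of permutations π ∈ Sym(m) with exactly j cycles satisfies S(j,m) < (m!)^{0.41}. -/
/-!
Freezing every cycle minimum of a permutation `π` of a finite linear order gives a map
`α → α` whose fixed points are exactly the cycle minima, and `π` can be read back from it. So
a permutation of `m` points with `j` cycles is encoded by `m - j` moved points and their images,
whence `S(j, m) ≤ C(m, m - j) m ^ (m - j) ≤ 2 ^ m m ^ (m / 4)` for `j > 3m/4`. Since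
`m! ≥ (m / e) ^ m`, this is below `(m!) ^ 0.41` as soon as `log m ≥ 10`.
-/

open Equiv MulAction

open Finset

theorem Setoid.card_quotient_eq_card_classMin {α : Type*} [LinearOrder α] [WellFoundedLT α]
    (s : Setoid α) : Nat.card (Quotient s) = Nat.card {x : α // ∀ y, s y x → x ≤ y} := by
  refine (Nat.card_congr (Equiv.ofBijective (fun x => Quotient.mk s x.1) ⟨?_, ?_⟩)).symm
  · rintro ⟨x, hx⟩ ⟨y, hy⟩ hxy
    have hxy : s x y := Quotient.exact hxy
    exact Subtype.ext (le_antisymm (hx y (s.symm hxy)) (hy x hxy))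
  · refine Quotient.ind fun x => ?_
    obtain ⟨y, hxy, hmin⟩ := WellFounded.has_min wellFounded_lt {y | s y x} ⟨x, s.refl x⟩
    refine ⟨⟨y, fun z hzy => not_lt.mp fun hzy' => hmin z (s.trans hzy hxy) hzy'⟩, ?_⟩
    exact Quotient.sound hxy

namespace Equiv.Perm

variable {α : Type*}

theorem orbitRel_zpowers_iff_sameCycle (π : Perm α) {x y : α} :
    orbitRel (Subgroup.zpowers π) α x y ↔ π.SameCycle y x := by
  rw [orbitRel_apply, mem_orbit_iff, Subgroup.exists_zpowers]
  rfl

variable [LinearOrder α]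

def IsCycleMin (π : Perm α) (x : α) : Prop := ∀ y, π.SameCycle x y → x ≤ y

theorem IsCycleMin.eq_of_sameCycle {π : Perm α} {x y : α} (hx : π.IsCycleMin x)
    (hy : π.IsCycleMin y) (h : π.SameCycle x y) : x = y :=
  le_antisymm (hx y h) (hy x h.symm)

theorem exists_pow_apply_isCycleMin [Finite α] (π : Perm α) (x : α) :
    ∃ n : ℕ, π.IsCycleMin ((π ^ n) x) := by
  obtain ⟨y, hxy, hmin⟩ := WellFounded.has_min wellFounded_lt {y | π.SameCycle x y} ⟨x, .rfl⟩
  obtain ⟨n, -, rfl⟩ := SameCycle.exists_pow_eq' hxy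
  exact ⟨n, fun z hz => not_lt.mp fun hzy => hmin z (hxy.trans hz) hzy⟩

open scoped Classical in
noncomputable def fixCycleMins (π : Perm α) (x : α) : α := if π.IsCycleMin x then x else π x

theorem fixCycleMins_eq_self_iff {π : Perm α} {x : α} : π.fixCycleMins x = x ↔ π.IsCycleMin x := by
  unfold fixCycleMins
  split_ifs with hx
  · exact iff_of_true rfl hx
  · exact iff_of_false (fun hfix => hx fun y hxy => (hxy.eq_of_left hfix).le) hx

theorem isCycleMin_iff_of_fixCycleMins_eq {π π' : Perm α}
    (h : π.fixCycleMins = π'.fixCycleMins) (x : α) : π.IsCycleMin x ↔ π'.IsCycleMin x := by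
  rw [← fixCycleMins_eq_self_iff, ← fixCycleMins_eq_self_iff, h]

theorem apply_eq_of_fixCycleMins_eq {π π' : Perm α}
    (h : π.fixCycleMins = π'.fixCycleMins) {x : α} (hx : ¬ π.IsCycleMin x) : π x = π' x := by
  have hx' : ¬ π'.IsCycleMin x := by rwa [← isCycleMin_iff_of_fixCycleMins_eq h]
  simpa [fixCycleMins, hx, hx'] using congrFun h x

theorem pow_apply_eq_of_fixCycleMins_eq {π π' : Perm α}
    (h : π.fixCycleMins = π'.fixCycleMins) {x : α} {n : ℕ}
    (hn : ∀ i < n, ¬ π.IsCycleMin ((π ^ i) x)) : (π ^ n) x = (π' ^ n) x := by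
  induction n with
  | zero => rfl
  | succ n ih =>
    rw [pow_succ', pow_succ', mul_apply, mul_apply, ← ih fun i hi => hn i (by omega)]
    exact apply_eq_of_fixCycleMins_eq h (hn n n.lt_succ_self)

/-- On a cycle minimum `a`, write `b = π' a`. The `π`-preimage `c` of `b` is a cycle minimum
of `π`, and following `π` from `b` up to the first cycle minimum `d` also follows `π'`; so `d`
lies in the `π`-cycle of `c` and in the `π'`-cycle of `a`, forcing `c = d = a`. -/
theorem fixCycleMins_injective [Finite α] : Function.Injective (fixCycleMins : Perm α → α → α) := by
  classical
  intro π π' h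
  ext a
  by_cases ha : π.IsCycleMin a
  swap
  · exact apply_eq_of_fixCycleMins_eq h ha
  have ha' : π'.IsCycleMin a := (isCycleMin_iff_of_fixCycleMins_eq h a).mp ha
  set b := π' a
  have hc : π.IsCycleMin (π.symm b) := by
    by_contra hc
    have := apply_eq_of_fixCycleMins_eq h hc
    rw [apply_symm_apply] at this
    exact hc (π'.injective this.symm ▸ ha)
  have hex := π.exists_pow_apply_isCycleMin b
  set n := Nat.find hex
  have hd : π.IsCycleMin ((π ^ n) b) := Nat.find_spec hex
  have hπ : π.SameCycle (π.symm b) ((π ^ n) b) := sameCycle_pow_right.mpr ⟨1, by simp⟩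
  have hπ' : π'.SameCycle a ((π ^ n) b) := by
    rw [pow_apply_eq_of_fixCycleMins_eq h fun i hi => Nat.find_min hex hi]
    exact sameCycle_pow_right.mpr ⟨1, by simp [b]⟩
  have hd' : π'.IsCycleMin ((π ^ n) b) := (isCycleMin_iff_of_fixCycleMins_eq h _).mp hd
  have hca : π.symm b = a := (hc.eq_of_sameCycle hd hπ).trans (ha'.eq_of_sameCycle hd' hπ').symm
  rw [← hca, apply_symm_apply]

end Equiv.Perm

theorem cycleCount_eq_card_isCycleMin {α : Type*} [LinearOrder α] [WellFoundedLT α] (π : Perm α) :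
    cycleCount π = Nat.card {x : α // π.IsCycleMin x} := by
  rw [cycleCount, orbitRel.Quotient, Setoid.card_quotient_eq_card_classMin]
  simp only [Perm.orbitRel_zpowers_iff_sameCycle, Perm.IsCycleMin]

theorem card_filter_card_ne_self_eq_le {α : Type*} [Fintype α] [DecidableEq α] (k : ℕ) :
    #{f : α → α | #{x | f x ≠ x} = k} ≤ (Fintype.card α).choose k * Fintype.card α ^ k := by
  set moved : (α → α) → Finset α := fun f => {x | f x ≠ x}
  have hfiber : ∀ S ∈ powersetCard k (univ : Finset α),
      #{f ∈ {f : α → α | #(moved f) = k} | moved f = S} ≤ Fintype.card α ^ k := by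
    intro S hS
    calc _ ≤ #(univ : Finset (S → α)) := by
          refine card_le_card_of_injOn (fun f x => f x) (fun _ _ => mem_univ _)
            fun f hf g hg hfg => ?_
          rw [mem_coe, mem_filter] at hf hg
          funext x
          by_cases hx : x ∈ S
          · exact congrFun hfg ⟨x, hx⟩
          · have hfx : x ∉ moved f := hf.2 ▸ hx
            have hgx : x ∉ moved g := hg.2 ▸ hx
            simp only [moved, mem_filter, mem_univ, true_and, not_not] at hfx hgx
            rw [hfx, hgx]
      _ = Fintype.card α ^ k := by
        rw [card_univ, Fintype.card_fun, Fintype.card_coe, (mem_powersetCard.mp hS).2]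
  calc #{f : α → α | #(moved f) = k}
      = ∑ S ∈ powersetCard k univ, #{f ∈ {f : α → α | #(moved f) = k} | moved f = S} :=
        card_eq_sum_card_fiberwise fun f hf =>
          mem_powersetCard.mpr ⟨subset_univ _, (mem_filter.mp hf).2⟩
    _ ≤ ∑ S ∈ powersetCard k univ, Fintype.card α ^ k := sum_le_sum hfiber
    _ = _ := by rw [sum_const, card_powersetCard, card_univ, smul_eq_mul]

open Perm in
theorem card_cycleCount_eq_le {α : Type*} [Fintype α] (j : ℕ) :
    Nat.card {π : Perm α // cycleCount π = j} ≤
      (Fintype.card α).choose (Fintype.card α - j) * Fintype.card α ^ (Fintype.card α - j) := by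
  classical
  let _ : LinearOrder α := LinearOrder.lift' _ (Fintype.equivFin α).injective
  have hmoved (π : Perm α) : #{x | π.fixCycleMins x ≠ x} = Fintype.card α - cycleCount π := by
    have hmin : #{x | π.fixCycleMins x = x} = cycleCount π := by
      simp only [fixCycleMins_eq_self_iff, cycleCount_eq_card_isCycleMin, Nat.card_eq_fintype_card,
        Fintype.card_subtype]
    have := card_filter_add_card_filter_not (s := univ) (fun x => π.fixCycleMins x = x)
    rw [card_univ] at this
    simp only [ne_eq]
    omega
  calc Nat.card {π : Perm α // cycleCount π = j}
      ≤ Nat.card {f : α → α // #{x | f x ≠ x} = Fintype.card α - j} :=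
        Nat.card_le_card_of_injective (fun π => ⟨π.1.fixCycleMins, by rw [hmoved, π.2]⟩)
          fun π σ h => Subtype.ext (fixCycleMins_injective (congrArg Subtype.val h))
    _ = #{f : α → α | #{x | f x ≠ x} = Fintype.card α - j} := by
        rw [Nat.card_eq_fintype_card, Fintype.card_subtype]
    _ ≤ _ := card_filter_card_ne_self_eq_le _

open Real in
theorem two_pow_mul_pow_lt_factorial_rpow {m k : ℕ} (hm : 3 ^ 10 ≤ m) (hk : 4 * k ≤ m) :
    (2 : ℝ) ^ m * (m : ℝ) ^ k < (m.factorial : ℝ) ^ (0.41 : ℝ) := by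
  have hm0 : (0 : ℝ) < m := by exact_mod_cast (by omega : 0 < m)
  have hlogm : 10 ≤ log m :=
    calc (10 : ℝ) ≤ 10 * log 3 := by
          have : 1 ≤ log 3 := (le_log_iff_exp_le (by norm_num)).mpr
            (exp_one_lt_d9.le.trans (by norm_num))
          linarith
      _ = log ((3 ^ 10 : ℕ) : ℝ) := by rw [Nat.cast_pow, Real.log_pow]; norm_num
      _ ≤ log m := log_le_log (by positivity) (by exact_mod_cast hm)
  have hfact : m * log m - m ≤ log (m.factorial : ℝ) := by
    have h := log_le_log (by positivity) (pow_div_factorial_le_exp _ hm0.le m)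
    rw [log_div (by positivity) (by positivity), log_pow, log_exp] at h
    linarith
  have hk' : (k : ℝ) * log m ≤ m / 4 * log m :=
    mul_le_mul_of_nonneg_right
      (by rw [le_div_iff₀ (by norm_num)]; exact_mod_cast (by omega : k * 4 ≤ m)) (by linarith)
  have hmlog : (m : ℝ) * 10 ≤ m * log m := mul_le_mul_of_nonneg_left hlogm hm0.le
  have hlog2 : (m : ℝ) * log 2 ≤ m * 0.7 :=
    mul_le_mul_of_nonneg_left (log_two_lt_d9.trans (by norm_num)).le hm0.le
  rw [lt_rpow_iff_log_lt (by positivity) (by positivity), log_mul (by positivity) (by positivity),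
    log_pow, log_pow]
  linarith

/-- There is `N` such that for all `m ≥ N` and `j > 3m/4`, the number of permutations in
`Sym(m)` with exactly `j` cycles is less than `(m!)^{0.41}`. -/
theorem statement12 :
    ∃ N : ℕ, 0 < N ∧ ∀ m : ℕ, N ≤ m → ∀ j : ℕ, 3 * (m : ℝ) / 4 < (j : ℝ) →
      (Nat.card {π : Perm (Fin m) // cycleCount π = j} : ℝ) <
        (m.factorial : ℝ) ^ (0.41 : ℝ) := by
  refine ⟨3 ^ 10, by norm_num, fun m hm j hj => ?_⟩
  have hk : 4 * (m - j) ≤ m := by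
    have : 3 * m < 4 * j := by exact_mod_cast (by linarith : (3 * m : ℝ) < 4 * j)
    omega
  calc (Nat.card {π : Perm (Fin m) // cycleCount π = j} : ℝ)
      ≤ (2 : ℝ) ^ m * (m : ℝ) ^ (m - j) := by
        have h := card_cycleCount_eq_le (α := Fin m) j
        rw [Fintype.card_fin] at h
        exact_mod_cast h.trans (Nat.mul_le_mul_right _ (Nat.choose_le_two_pow _ _))
    _ < _ := two_pow_mul_pow_lt_factorial_rpow hm hk
end

section
/- There exists a positive integer N such that for every m ≥ N, every integer ℓ with 1 ≤ ℓ < m/2, and every π ∈ Sym(m) with σ(π) ≤ 3m/4, the number of ℓ-element subsets of {1,…,m} that are fixed setwise by π is strictly less than (3/4)·C(m,ℓ). -/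
open Equiv MulAction

/-! An invariant set is a union of cycles of `π`, so it is determined by a set of at most `ℓ`
cycles: there are at most `∑_{j ≤ ℓ} C(c, j)` invariant `ℓ`-sets, where `c = σ(π) ≤ 3m/4`.
For `ℓ = 1` the invariant singletons are the fixed points, and there are fewer of them than
cycles since `π ≠ 1`. For `2 ≤ ℓ ≤ 12` the sum is dominated by its last term:
it is at most `(5/4) C(3m/4, ℓ) ≤ (5/4) (3/4)^ℓ C(m, ℓ)`. For larger `ℓ` every term is at most
`C(3m/4, k)` with `k = min(ℓ, 3m/8)`, which is at most `(3/4)^k C(m, ℓ)`, and `(3/4)^k` absorbs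
the number `ℓ + 1` of terms. -/

open Finset

namespace Nat

theorem choose_le_choose_right_of_le_half {n r s : ℕ} (hrs : r ≤ s) (hs : s ≤ n / 2) :
    n.choose r ≤ n.choose s := by
  induction s, hrs using Nat.le_induction with
  | base => exact le_rfl
  | succ s _ ih => exact (ih (by omega)).trans (choose_le_succ_of_lt_half_left (by omega))

theorem choose_le_choose_min_half {a j ℓ : ℕ} (hj : j ≤ ℓ) :
    a.choose j ≤ a.choose (min ℓ (a / 2)) := by
  rcases le_or_gt j (a / 2) with h | h
  · exact choose_le_choose_right_of_le_half (le_min hj h) (min_le_right _ _)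
  · rw [min_eq_right (by omega)]
    exact choose_le_middle j a

theorem pow_mul_choose_le_pow_mul_choose {p q a b : ℕ} (hqp : q ≤ p) (h : p * a ≤ q * b)
    (k : ℕ) : p ^ k * a.choose k ≤ q ^ k * b.choose k := by
  induction k with
  | zero => simp
  | succ k ih =>
    have hstep : p * (a - k) ≤ q * (b - k) := by
      rw [Nat.mul_sub, Nat.mul_sub]
      have := Nat.mul_le_mul_right k hqp
      omega
    refine Nat.le_of_mul_le_mul_right ?_ k.succ_pos
    calc p ^ (k + 1) * a.choose (k + 1) * (k + 1)
        = p ^ k * a.choose k * (p * (a - k)) := by rw [mul_assoc, choose_succ_right_eq]; ring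
      _ ≤ q ^ k * b.choose k * (q * (b - k)) := Nat.mul_le_mul ih hstep
      _ = q ^ (k + 1) * b.choose (k + 1) * (k + 1) := by
        rw [mul_assoc _ _ (k + 1), choose_succ_right_eq]; ring

theorem mul_choose_le_choose_succ {r a k : ℕ} (h : r * (k + 1) ≤ a - k) :
    r * a.choose k ≤ a.choose (k + 1) := by
  refine Nat.le_of_mul_le_mul_right ?_ k.succ_pos
  calc r * a.choose k * (k + 1) = a.choose k * (r * (k + 1)) := by ring
    _ ≤ a.choose k * (a - k) := Nat.mul_le_mul_left _ h
    _ = a.choose (k + 1) * (k + 1) := (choose_succ_right_eq a k).symm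

theorem mul_sum_range_le_of_mul_le {r l : ℕ} {f : ℕ → ℕ}
    (h : ∀ k < l, (r + 1) * f k ≤ f (k + 1)) :
    r * ∑ j ∈ range (l + 1), f j ≤ (r + 1) * f l := by
  induction l with
  | zero => simpa using Nat.mul_le_mul_right (f 0) r.le_succ
  | succ l ih =>
    have := ih fun k hk => h k (by omega)
    have := h l (by omega)
    rw [sum_range_succ, mul_add]
    linarith

theorem mul_sum_range_choose_le {r a l : ℕ} (h : (r + 2) * l ≤ a + 1) :
    r * ∑ j ∈ range (l + 1), a.choose j ≤ (r + 1) * a.choose l :=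
  mul_sum_range_le_of_mul_le fun k hk => Nat.mul_choose_le_choose_succ <| by
    have := Nat.mul_le_mul_left (r + 2) (show k + 1 ≤ l by omega)
    have : (r + 1) * (k + 1) + k + 1 = (r + 2) * (k + 1) := by ring
    omega

end Nat

theorem five_mul_three_pow_lt {l : ℕ} (hl : 2 ≤ l) : 5 * 3 ^ l < 3 * 4 ^ l := by
  induction l, hl using Nat.le_induction with
  | base => norm_num
  | succ l _ ih => rw [pow_succ, pow_succ]; omega

theorem eight_mul_succ_mul_three_pow_lt {k : ℕ} (hk : 13 ≤ k) :
    8 * (k + 1) * 3 ^ k < 3 * 4 ^ k := by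
  induction k, hk using Nat.le_induction with
  | base => norm_num
  | succ k hk ih =>
    rw [pow_succ, pow_succ]
    nlinarith [pow_pos (show 0 < 3 by norm_num) k]

theorem four_mul_sum_range_choose_lt_of_six_mul_le {m a ℓ : ℕ} (ha : 4 * a ≤ 3 * m)
    (hℓa : 6 * ℓ ≤ a + 1) (hℓ : 2 ≤ ℓ) (hℓm : ℓ ≤ m) :
    4 * ∑ j ∈ range (ℓ + 1), a.choose j < 3 * m.choose ℓ := by
  have hgeom := Nat.mul_sum_range_choose_le (r := 4) hℓa
  have hratio := Nat.pow_mul_choose_le_pow_mul_choose (by norm_num) ha ℓ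
  have hpow := five_mul_three_pow_lt hℓ
  have hpos := Nat.choose_pos hℓm
  refine Nat.lt_of_mul_lt_mul_left (a := 4 ^ ℓ) ?_
  calc 4 ^ ℓ * (4 * ∑ j ∈ range (ℓ + 1), a.choose j)
      ≤ 4 ^ ℓ * (5 * a.choose ℓ) := by gcongr
    _ = 5 * (4 ^ ℓ * a.choose ℓ) := by ring
    _ ≤ 5 * (3 ^ ℓ * m.choose ℓ) := by gcongr
    _ = 5 * 3 ^ ℓ * m.choose ℓ := by ring
    _ < 3 * 4 ^ ℓ * m.choose ℓ := Nat.mul_lt_mul_of_pos_right hpow hpos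
    _ = 4 ^ ℓ * (3 * m.choose ℓ) := by ring

theorem four_mul_sum_range_choose_lt_of_thirteen_le_min {m a ℓ : ℕ} (ha : 4 * a ≤ 3 * m)
    (hℓa : ℓ ≤ a) (hk : 13 ≤ min ℓ (a / 2)) (hℓm : 2 * ℓ ≤ m) :
    4 * ∑ j ∈ range (ℓ + 1), a.choose j < 3 * m.choose ℓ := by
  set k := min ℓ (a / 2)
  have hsum : ∑ j ∈ range (ℓ + 1), a.choose j ≤ (ℓ + 1) * a.choose k := by
    simpa using sum_le_sum fun j hj => Nat.choose_le_choose_min_half (a := a)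
      (Nat.lt_succ_iff.mp (mem_range.mp hj))
  have hratio := Nat.pow_mul_choose_le_pow_mul_choose (by norm_num) ha k
  have hmono := Nat.choose_le_choose_right_of_le_half (n := m) (min_le_left ℓ (a / 2)) (by omega)
  have hpow := eight_mul_succ_mul_three_pow_lt hk
  have hℓk : ℓ + 1 ≤ 2 * (k + 1) := by omega
  have hpos := Nat.choose_pos (show ℓ ≤ m by omega)
  refine Nat.lt_of_mul_lt_mul_left (a := 4 ^ k) ?_
  calc 4 ^ k * (4 * ∑ j ∈ range (ℓ + 1), a.choose j)
      ≤ 4 ^ k * (4 * ((ℓ + 1) * a.choose k)) := by gcongr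
    _ = 4 * (ℓ + 1) * (4 ^ k * a.choose k) := by ring
    _ ≤ 4 * (2 * (k + 1)) * (3 ^ k * m.choose ℓ) :=
        Nat.mul_le_mul (by omega) (hratio.trans (Nat.mul_le_mul_left _ hmono))
    _ = 8 * (k + 1) * 3 ^ k * m.choose ℓ := by ring
    _ < 3 * 4 ^ k * m.choose ℓ := Nat.mul_lt_mul_of_pos_right hpow hpos
    _ = 4 ^ k * (3 * m.choose ℓ) := by ring

theorem Nat.card_finset_card_le_le_sum_choose (β : Type*) [Finite β] (ℓ : ℕ) :
    Nat.card {T : Finset β // T.card ≤ ℓ} ≤ ∑ j ∈ range (ℓ + 1), (Nat.card β).choose j := by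
  classical
  have := Fintype.ofFinite β
  calc Nat.card {T : Finset β // T.card ≤ ℓ}
      = #{T : Finset β | T.card ≤ ℓ} := by rw [Nat.card_eq_fintype_card, Fintype.card_subtype]
    _ ≤ #((range (ℓ + 1)).biUnion fun j => powersetCard j univ) := by
      refine card_le_card fun T hT => ?_
      simp only [mem_filter, mem_univ, true_and] at hT
      simpa [mem_biUnion, mem_powersetCard] using Nat.lt_succ_of_le hT
    _ ≤ ∑ j ∈ range (ℓ + 1), #(powersetCard j (univ : Finset β)) := card_biUnion_le
    _ = ∑ j ∈ range (ℓ + 1), (Nat.card β).choose j := by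
      simp [card_powersetCard, Nat.card_eq_fintype_card]

open scoped Pointwise

namespace Equiv.Perm

variable {α : Type*} {π : Perm α}

theorem sameCycle_of_mk_eq {x y : α}
    (h : (Quotient.mk'' x : orbitRel.Quotient (Subgroup.zpowers π) α) = Quotient.mk'' y) :
    π.SameCycle y x := by
  obtain ⟨⟨g, hg⟩, rfl⟩ := mem_orbit_iff.mp (Quotient.eq''.mp h)
  obtain ⟨k, rfl⟩ := Subgroup.mem_zpowers_iff.mp hg
  exact ⟨k, rfl⟩

theorem cycleCount_one [Finite α] : cycleCount (1 : Perm α) = Nat.card α :=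
  (Nat.card_eq_of_bijective _ ⟨fun _ _ h => (sameCycle_one.mp (sameCycle_of_mk_eq h)).symm,
    Quotient.mk''_surjective⟩).symm

theorem card_fixedPoints_lt_cycleCount [Finite α] (hπ : π ≠ 1) :
    Nat.card (Function.fixedPoints π) < cycleCount π := by
  obtain ⟨x₀, hx₀⟩ : ∃ x, π x ≠ x := by
    by_contra! h
    exact hπ (Equiv.ext h)
  have := Fintype.ofFinite (Function.fixedPoints π)
  have := Fintype.ofFinite (orbitRel.Quotient (Subgroup.zpowers π) α)
  rw [cycleCount, Nat.card_eq_fintype_card, Nat.card_eq_fintype_card]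
  refine Fintype.card_lt_of_injective_of_notMem (fun x => Quotient.mk'' (x : α))
    (fun x y h => Subtype.ext ((sameCycle_of_mk_eq h).eq_of_right x.2).symm)
    (b := Quotient.mk'' x₀) ?_
  rintro ⟨x, hx⟩
  obtain rfl := (sameCycle_of_mk_eq hx).eq_of_right x.2
  exact hx₀ x.2

theorem card_invariant_singletons_le [DecidableEq α] [Finite α] :
    Nat.card {s : Finset α // s.card = 1 ∧ s.image π = s} ≤
      Nat.card (Function.fixedPoints π) := by
  refine Nat.card_le_card_of_surjective
    (fun x => ⟨{x.1}, Finset.card_singleton _, by rw [Finset.image_singleton, x.2.eq]⟩) ?_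
  rintro ⟨s, hcard, hs⟩
  obtain ⟨x, rfl⟩ := Finset.card_eq_one.mp hcard
  exact ⟨⟨x, (by simpa using hs : π x = x)⟩, rfl⟩

theorem zpow_apply_mem_of_image_eq [DecidableEq α] {s : Finset α} (hs : s.image π = s) (k : ℤ)
    {x : α} (hx : x ∈ s) : (π ^ k) x ∈ s := by
  have hπs : π ∈ stabilizer (Perm α) s := by
    rwa [mem_stabilizer_iff, Finset.smul_finset_def]
  have := Finset.smul_mem_smul_finset (a := π ^ k) hx
  rwa [(stabilizer (Perm α) s).zpow_mem hπs k] at this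

theorem SameCycle.mem_of_image_eq [DecidableEq α] {s : Finset α} (hs : s.image π = s)
    {x y : α} (hxy : π.SameCycle x y) (hx : x ∈ s) : y ∈ s := by
  obtain ⟨k, rfl⟩ := hxy
  exact zpow_apply_mem_of_image_eq hs k hx

theorem card_invariant_le_sum_choose [DecidableEq α] [Finite α] (ℓ : ℕ) :
    Nat.card {s : Finset α // s.card = ℓ ∧ s.image π = s} ≤
      ∑ j ∈ range (ℓ + 1), (cycleCount π).choose j := by
  classical
  let Q := orbitRel.Quotient (Subgroup.zpowers π) α
  have subset_of_image_mk_eq : ∀ s t : Finset α, t.image π = t →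
      s.image Quotient.mk'' = t.image (Quotient.mk'' : α → Q) → s ⊆ t := by
    intro s t ht hst x hx
    obtain ⟨y, hy, hyx⟩ := mem_image.mp (hst ▸ mem_image_of_mem Quotient.mk'' hx)
    exact (sameCycle_of_mk_eq hyx).symm.mem_of_image_eq ht hy
  let F : {s : Finset α // s.card = ℓ ∧ s.image π = s} → {T : Finset Q // T.card ≤ ℓ} :=
    fun s => ⟨s.1.image Quotient.mk'', card_image_le.trans s.2.1.le⟩
  have hF : F.Injective := by
    intro ⟨s, _, hs⟩ ⟨t, _, ht⟩ hst
    have hst := congrArg Subtype.val hst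
    exact Subtype.ext <|
      (subset_of_image_mk_eq _ _ ht hst).antisymm (subset_of_image_mk_eq _ _ hs hst.symm)
  exact (Nat.card_le_card_of_injective F hF).trans (Nat.card_finset_card_le_le_sum_choose Q ℓ)

end Equiv.Perm

theorem four_mul_sum_range_choose_lt {m c ℓ : ℕ} (hm : 100 ≤ m) (hc : 4 * c ≤ 3 * m)
    (hℓ : 2 ≤ ℓ) (hℓm : 2 * ℓ < m) :
    4 * ∑ j ∈ range (ℓ + 1), c.choose j < 3 * m.choose ℓ := by
  set a := 3 * m / 4
  have hsum : ∑ j ∈ range (ℓ + 1), c.choose j ≤ ∑ j ∈ range (ℓ + 1), a.choose j :=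
    sum_le_sum fun j _ => Nat.choose_le_choose j (by omega)
  refine (Nat.mul_le_mul_left 4 hsum).trans_lt ?_
  rcases le_or_gt ℓ 12 with hsmall | hlarge
  · exact four_mul_sum_range_choose_lt_of_six_mul_le (by omega) (by omega) hℓ (by omega)
  · exact four_mul_sum_range_choose_lt_of_thirteen_le_min (by omega) (by omega) (by omega)
      (by omega)

/-- There is `N` such that for all `m ≥ N`, `1 ≤ ℓ < m/2` and `π ∈ Sym(m)` with
`σ(π) ≤ 3m/4`, the number of `ℓ`-subsets of `{1,…,m}` fixed setwise by `π` is less than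
`(3/4) C(m,ℓ)`. -/
theorem statement13 :
    ∃ N : ℕ, 0 < N ∧ ∀ m : ℕ, N ≤ m → ∀ ℓ : ℕ, 1 ≤ ℓ → 2 * ℓ < m →
      ∀ π : Perm (Fin m), (cycleCount π : ℝ) ≤ 3 * (m : ℝ) / 4 →
      (Nat.card {s : Finset (Fin m) // s.card = ℓ ∧ s.image π = s} : ℝ) <
        (3 / 4 : ℝ) * (m.choose ℓ : ℝ) := by
  refine ⟨100, by norm_num, fun m hm ℓ hℓ hℓm π hπ => ?_⟩
  have hc : 4 * cycleCount π ≤ 3 * m := by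
    have : (4 * cycleCount π : ℝ) ≤ 3 * m := by linarith
    exact_mod_cast this
  suffices h : 4 * Nat.card {s : Finset (Fin m) // s.card = ℓ ∧ s.image π = s} <
      3 * m.choose ℓ by
    have : ((4 * _ : ℕ) : ℝ) < (3 * m.choose ℓ : ℕ) := Nat.cast_lt.mpr h
    push_cast at this
    linarith
  rcases hℓ.eq_or_lt with rfl | hℓ
  · have hπ1 : π ≠ 1 := by
      rintro rfl
      rw [Perm.cycleCount_one, Nat.card_fin] at hc
      omega
    have := Perm.card_fixedPoints_lt_cycleCount hπ1
    have := Perm.card_invariant_singletons_le (π := π)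
    rw [Nat.choose_one_right]
    omega
  · exact (Nat.mul_le_mul_left 4 (Perm.card_invariant_le_sum_choose (π := π) ℓ)).trans_lt
      (four_mul_sum_range_choose_lt hm hc hℓ hℓm)
end

section
/- Let n be an even positive integer, let X = C₂ be the cyclic group of order 2 (so k(X) = 2), and let H = C₂ ≀ C_{n/2} be the imprimitive transitive permutation group of degree n in which n/2 blocks of size 2 are permuted cyclically by C_{n/2} and C₂ acts on each block. Let G = X ≀ H. Then k(G) ≥ 5^{n/2}/(n/2); in particular, there exists N such that k(G) > 2^n for every even n ≥ N. -/
/-! Inside `G = X ≀ (C₂ ≀ C_r)`, the elements whose permutation part preserves every block form a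
subgroup isomorphic to `(X ≀ S₂)^r`. Every element of `G` is such an element times a power of the
block rotation, whose order divides `r`, so this subgroup has index at most `r`. A subgroup of
index `i` has at most `i` times as many conjugacy classes as the whole group (compare commuting
probabilities), and `k((X ≀ S₂)^r) = k(X ≀ S₂)^r`, which is `5^r` for `X = C₂` because `C₂ ≀ S₂`
is dihedral of order 8. -/

open Equiv MulAction

/-- The base of the imprimitive wreath product `C₂ ≀ C_{n/2}`:
each `g : Fin r → Perm (Fin 2)` acts within the blocks `{j} × Fin 2`. -/
def imprimBase (r : ℕ) : (Fin r → Perm (Fin 2)) →* Perm (Fin r × Fin 2) where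
  toFun g := Equiv.prodShear (Equiv.refl (Fin r)) g
  map_one' := Equiv.ext fun x => by simp
  map_mul' g h := Equiv.ext fun x => by simp

/-- The top of the imprimitive wreath product: a permutation of `Fin r` permutes the blocks. -/
def imprimTop (r : ℕ) : Perm (Fin r) →* Perm (Fin r × Fin 2) where
  toFun π := Equiv.prodCongr π (Equiv.refl (Fin 2))
  map_one' := Equiv.ext fun x => by simp
  map_mul' π τ := Equiv.ext fun x => by obtain ⟨a, b⟩ := x; simp

/-- The imprimitive transitive permutation group `C₂ ≀ C_{n/2}` of degree `n = 2r`: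
`n/2` blocks of size 2 permuted cyclically by `C_{n/2}`, with `C₂` acting on each block. -/
def imprimWreath (r : ℕ) : Subgroup (Perm (Fin r × Fin 2)) :=
  Subgroup.map (imprimBase r) ⊤ ⊔ Subgroup.map (imprimTop r) (Subgroup.zpowers (finRotate r))

theorem Subgroup.card_conjClasses_le_index_mul {G : Type*} [Group G] [Finite G] (H : Subgroup G) :
    Nat.card (ConjClasses H) ≤ H.index * Nat.card (ConjClasses G) := by
  have hle := H.commProb_subgroup_le
  rw [commProb_def', commProb_def', ← H.card_mul_index] at hle
  have hH : (0 : ℚ) < Nat.card H := by exact_mod_cast Nat.card_pos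
  have hi : (H.index : ℚ) ≠ 0 := by exact_mod_cast H.index_ne_zero_of_finite
  have hrhs : (Nat.card (ConjClasses G) : ℚ) / ↑(Nat.card H * H.index) * H.index ^ 2 =
      H.index * Nat.card (ConjClasses G) / Nat.card H := by
    push_cast
    field_simp
  rw [hrhs, div_le_div_iff_of_pos_right hH] at hle
  exact_mod_cast hle

theorem card_conjClasses_function (α G : Type*) [Fintype α] [Group G] [Finite G] :
    Nat.card (ConjClasses (α → G)) = Nat.card (ConjClasses G) ^ Fintype.card α := by
  have h := commProb_function (α := α) (β := G)
  rw [commProb_def', commProb_def', Nat.card_fun, Nat.card_eq_fintype_card (α := α)] at h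
  have hG : (Nat.card G : ℚ) ≠ 0 := by exact_mod_cast Nat.card_pos.ne'
  rw [div_pow, Nat.cast_pow, div_left_inj' (pow_ne_zero _ hG)] at h
  exact_mod_cast h

theorem Subgroup.index_le_card_of_forall_exists_mul {G : Type*} [Group G] [Finite G]
    {H T : Subgroup G} (h : ∀ g, ∃ a ∈ H, ∃ b ∈ T, a * b = g) :
    H.index ≤ Nat.card T := by
  have hsurj : Function.Surjective fun p : H × T => (p.1 : G) * p.2 := by
    intro g
    obtain ⟨a, ha, b, hb, rfl⟩ := h g
    exact ⟨(⟨a, ha⟩, ⟨b, hb⟩), rfl⟩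
  have hcard := Nat.card_le_card_of_surjective _ hsurj
  rw [Nat.card_prod, ← H.card_mul_index] at hcard
  exact Nat.le_of_mul_le_mul_left hcard Nat.card_pos

open Fin.NatCast in
lemma finRotate_pow_self (n : ℕ) : finRotate n ^ n = 1 := by
  rcases eq_zero_or_neZero n with rfl | _
  · rfl
  have hpow : ∀ k : ℕ, ∀ i, (finRotate n ^ k) i = i + (k : Fin n) := by
    intro k
    induction k with
    | zero => simp
    | succ k ih =>
      intro i
      rw [pow_succ', Perm.mul_apply, ih, finRotate_apply, Nat.cast_succ, add_assoc]
  exact Equiv.ext fun i => by rw [hpow, Fin.natCast_self, add_zero]; rfl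

namespace SemidirectProduct

variable {N G : Type*} [Group N] [Group G] {φ : G →* MulAut N}

instance [Finite N] [Finite G] : Finite (N ⋊[φ] G) := Finite.of_equiv _ equivProd.symm

instance [Fintype N] [Fintype G] : Fintype (N ⋊[φ] G) := Fintype.ofEquiv _ equivProd.symm

instance [DecidableEq N] [DecidableEq G] : DecidableEq (N ⋊[φ] G) :=
  equivProd.injective.decidableEq

end SemidirectProduct

/-- `X ≀ S₂`, the wreath product acting on a single block. -/
abbrev BlockGroup (X : Type*) [Group X] :=
  SemidirectProduct (Fin 2 → X) (Perm (Fin 2)) (permAut (Fin 2) X)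

lemma card_conjClasses_blockGroup_zmod_two :
    Nat.card (ConjClasses (BlockGroup (Multiplicative (ZMod 2)))) = 5 := by
  rw [Nat.card_eq_fintype_card]
  decide

section ImprimitiveWreath

variable (X : Type*) [Group X] (r : ℕ)

lemma imprimBase_mem_imprimWreath (g : Fin r → Perm (Fin 2)) :
    imprimBase r g ∈ imprimWreath r :=
  Subgroup.mem_sup_left ⟨g, trivial, rfl⟩

lemma imprimTop_mem_imprimWreath {π : Perm (Fin r)} (hπ : π ∈ Subgroup.zpowers (finRotate r)) :
    imprimTop r π ∈ imprimWreath r :=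
  Subgroup.mem_sup_right ⟨π, hπ, rfl⟩

lemma imprimTop_mul_imprimBase_mul_inv (π : Perm (Fin r)) (g : Fin r → Perm (Fin 2)) :
    imprimTop r π * imprimBase r g * (imprimTop r π)⁻¹ = imprimBase r (g ∘ π.symm) := by
  refine Equiv.ext fun ⟨j, i⟩ => ?_
  simp [imprimTop, imprimBase, Perm.mul_apply, Perm.inv_def]

lemma range_imprimTop_le_normalizer :
    (imprimTop r).range ≤
      Subgroup.normalizer (Subgroup.map (imprimBase r) ⊤ : Set (Perm (Fin r × Fin 2))) := by
  have hconj : ∀ π : Perm (Fin r), ∀ h ∈ Subgroup.map (imprimBase r) ⊤,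
      imprimTop r π * h * (imprimTop r π)⁻¹ ∈ Subgroup.map (imprimBase r) ⊤ := by
    rintro π _ ⟨g, -, rfl⟩
    exact ⟨g ∘ π.symm, trivial, (imprimTop_mul_imprimBase_mul_inv r π g).symm⟩
  rintro _ ⟨π, rfl⟩
  refine Subgroup.mem_normalizer_iff.mpr fun h => ⟨hconj π h, fun hh => ?_⟩
  simpa [map_inv, mul_assoc] using hconj π⁻¹ _ hh

lemma exists_imprimBase_mul_imprimTop {h : Perm (Fin r × Fin 2)} (hh : h ∈ imprimWreath r) :
    ∃ g : Fin r → Perm (Fin 2), ∃ m : ℤ,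
      imprimBase r g * imprimTop r (finRotate r ^ m) = h := by
  have hle : Subgroup.map (imprimTop r) (Subgroup.zpowers (finRotate r)) ≤
      Subgroup.normalizer (Subgroup.map (imprimBase r) ⊤ : Set (Perm (Fin r × Fin 2))) :=
    (Subgroup.map_le_range _ _).trans (range_imprimTop_le_normalizer r)
  rw [imprimWreath, ← SetLike.mem_coe, Subgroup.coe_mul_of_right_le_normalizer_left _ _ hle] at hh
  obtain ⟨_, ⟨g, -, rfl⟩, _, ⟨_, ⟨m, rfl⟩, rfl⟩, rfl⟩ := hh
  exact ⟨g, m, rfl⟩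

def blockEmbedding : (Fin r → BlockGroup X) →* Wreath X (imprimWreath r) where
  toFun x := ⟨fun p => (x p.1).left p.2,
    ⟨imprimBase r fun j => (x j).right, imprimBase_mem_imprimWreath r _⟩⟩
  map_one' := SemidirectProduct.ext rfl (Subtype.ext (map_one (imprimBase r)))
  map_mul' _ _ :=
    SemidirectProduct.ext (funext fun _ => rfl) (Subtype.ext (map_mul (imprimBase r) _ _))

lemma blockEmbedding_injective : Function.Injective (blockEmbedding X r) := by
  intro x y hxy
  funext j
  refine SemidirectProduct.ext
    (funext fun i => congrFun (congrArg SemidirectProduct.left hxy) (j, i)) (Equiv.ext fun i => ?_)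
  have hright := congrArg (fun z => ((z.right : Perm (Fin r × Fin 2)) (j, i)).2) hxy
  simpa [blockEmbedding, imprimBase] using hright

def blockRotation : Wreath X (imprimWreath r) :=
  SemidirectProduct.inr ⟨imprimTop r (finRotate r),
    imprimTop_mem_imprimWreath r (Subgroup.mem_zpowers _)⟩

lemma blockRotation_pow_self : blockRotation X r ^ r = 1 := by
  rw [blockRotation, ← map_pow, ← map_one SemidirectProduct.inr]
  congr 1
  rw [Subtype.ext_iff, SubgroupClass.coe_pow, ← map_pow, finRotate_pow_self, map_one]
  rfl

lemma blockRotation_zpow (m : ℤ) : blockRotation X r ^ m =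
    SemidirectProduct.inr ⟨imprimTop r (finRotate r ^ m),
      imprimTop_mem_imprimWreath r (Subgroup.zpow_mem_zpowers _ m)⟩ := by
  rw [blockRotation, ← map_zpow]
  congr 1
  exact Subtype.ext (map_zpow _ _ _).symm

lemma exists_blockEmbedding_mul_blockRotation_zpow (g : Wreath X (imprimWreath r)) :
    ∃ x, ∃ m : ℤ, blockEmbedding X r x * blockRotation X r ^ m = g := by
  obtain ⟨b, m, hb⟩ := exists_imprimBase_mul_imprimTop r g.right.2
  refine ⟨fun j => ⟨fun i => g.left (j, i), b j⟩, m, SemidirectProduct.ext ?_ ?_⟩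
  · funext p
    simp [blockRotation_zpow, blockEmbedding]
  · refine Subtype.ext ?_
    simpa [blockRotation_zpow, blockEmbedding] using hb

lemma index_range_blockEmbedding_le [Finite X] (hr : 0 < r) :
    (blockEmbedding X r).range.index ≤ r :=
  calc (blockEmbedding X r).range.index
      ≤ Nat.card (Subgroup.zpowers (blockRotation X r)) :=
        Subgroup.index_le_card_of_forall_exists_mul fun g => by
          obtain ⟨x, m, rfl⟩ := exists_blockEmbedding_mul_blockRotation_zpow X r g
          exact ⟨_, ⟨x, rfl⟩, _, Subgroup.zpow_mem_zpowers _ m, rfl⟩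
    _ = orderOf (blockRotation X r) := Nat.card_zpowers _
    _ ≤ r := orderOf_le_of_pow_eq_one hr (blockRotation_pow_self X r)

theorem card_conjClasses_blockGroup_pow_le [Finite X] (hr : 0 < r) :
    Nat.card (ConjClasses (BlockGroup X)) ^ r ≤ r * kclass (Wreath X (imprimWreath r)) := by
  let e := MonoidHom.ofInjective (blockEmbedding_injective X r)
  calc Nat.card (ConjClasses (BlockGroup X)) ^ r
      = Nat.card (ConjClasses (Fin r → BlockGroup X)) := by
        rw [card_conjClasses_function, Fintype.card_fin]
    _ ≤ Nat.card (ConjClasses (blockEmbedding X r).range) :=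
        Nat.card_le_card_of_surjective _
          (ConjClasses.map_surjective (f := (e.symm : _ →* _)) e.symm.surjective)
    _ ≤ (blockEmbedding X r).range.index * kclass (Wreath X (imprimWreath r)) :=
        Subgroup.card_conjClasses_le_index_mul _
    _ ≤ r * kclass (Wreath X (imprimWreath r)) :=
        Nat.mul_le_mul_right _ (index_range_blockEmbedding_le X r hr)

end ImprimitiveWreath

lemma mul_four_pow_lt_five_pow {m : ℕ} (hm : 16 ≤ m) : m * 4 ^ m < 5 ^ m := by
  induction m, hm using Nat.le_induction with
  | base => norm_num
  | succ n _ ih =>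
    rw [pow_succ, pow_succ]
    nlinarith [Nat.pow_pos (n := n) (by norm_num : 0 < 4)]

/-- For `X = C₂` and `H = C₂ ≀ C_{n/2}` imprimitive of even degree `n = 2r`, we have
`k(X ≀ H) ≥ 5^{n/2} / (n/2)`; in particular `k(X ≀ H) > 2^n` for all sufficiently large
even `n`. -/
theorem statement18 :
    (∀ r : ℕ, 1 ≤ r →
      (5 : ℝ) ^ r / (r : ℝ) ≤
        (kclass (Wreath (Multiplicative (ZMod 2)) (imprimWreath r)) : ℝ)) ∧
    ∃ N : ℕ, ∀ r : ℕ, 1 ≤ r → N ≤ 2 * r →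
      2 ^ (2 * r) < kclass (Wreath (Multiplicative (ZMod 2)) (imprimWreath r)) := by
  have hmain : ∀ r : ℕ, 1 ≤ r →
      5 ^ r ≤ r * kclass (Wreath (Multiplicative (ZMod 2)) (imprimWreath r)) := fun r hr =>
    card_conjClasses_blockGroup_zmod_two ▸ card_conjClasses_blockGroup_pow_le _ r hr
  refine ⟨fun r hr => ?_, 32, fun r hr hN => ?_⟩
  · rw [div_le_iff₀ (by positivity), mul_comm]
    exact_mod_cast hmain r hr
  · rw [pow_mul]
    exact lt_of_mul_lt_mul_left ((mul_four_pow_lt_five_pow (by omega)).trans_le (hmain r hr))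
      r.zero_le
end

section
/- Let Ω be a finite set with |Ω| ≥ 2 and let x = (x₁,…,x_t)π ∈ Sym(Ω) ≀ Sym(t) act on Ω^t via the product action, where x₁,…,x_t ∈ Sym(Ω) and π ∈ Sym(t). If π has a cycle of length r ≥ 2, then the number of fixed points of x on Ω^t is at most |Ω|^{t−(r−1)}; in particular the fixed point ratio of x on Ω^t is at most |Ω|^{1−r}. -/
open Equiv MulAction

/-- The base of a wreath product in product action: `(Sym Ω)^t → Sym (Ω^t)`. -/
def baseHom (t : ℕ) (Ω : Type*) : (Fin t → Perm Ω) →* Perm (Fin t → Ω) :=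
  MulAction.toPermHom _ _

/-- The top of a wreath product in product action: `Sym(t) → Sym (Ω^t)`,
permuting coordinates. -/
def topHom (t : ℕ) (Ω : Type*) : Perm (Fin t) →* Perm (Fin t → Ω) :=
  MulAction.toPermHom _ _

/-- If `x = (x₁,…,x_t)π ∈ Sym(Ω) ≀ Sym(t)` acts on `Ω^t` in the product action and `π` has
a cycle of length `r ≥ 2`, then `x` has at most `|Ω|^{t-(r-1)}` fixed points on `Ω^t`; in
particular its fixed point ratio is at most `|Ω|^{1-r}`. -/
theorem statement19 (t : ℕ) (Ω : Type) [Finite Ω] (hΩ : 2 ≤ Nat.card Ω)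
    (xs : Fin t → Perm Ω) (π : Perm (Fin t)) (r : ℕ) (hr : 2 ≤ r)
    (hcyc : (r : ℕ) ∈ π.cycleType) :
    Nat.card {f : Fin t → Ω // (baseHom t Ω xs * topHom t Ω π) f = f} ≤
        Nat.card Ω ^ (t - (r - 1)) ∧
    (Nat.card {f : Fin t → Ω // (baseHom t Ω xs * topHom t Ω π) f = f} : ℝ) /
        (Nat.card Ω : ℝ) ^ t ≤ (Nat.card Ω : ℝ) ^ (1 - (r : ℤ)) := by
  classical
  obtain ⟨c, τ, hπ, hdisj, hc, hcard⟩ := Perm.mem_cycleType_iff.mp hcyc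
  have hsupp : c.support.Nonempty := by
    rw [← Finset.card_pos, hcard]; omega
  obtain ⟨i₀, hi₀⟩ := hsupp
  have hmem : c ∈ π.cycleFactorsFinset := by
    rw [Perm.mem_cycleFactorsFinset_iff]
    refine ⟨hc, fun a ha => ?_⟩
    have hτ : τ a = a := by
      rcases hdisj a with h | h
      · exact absurd h (Perm.mem_support.mp ha)
      · exact h
    rw [hπ, Perm.mul_apply, hτ]
  have hceq : c = π.cycleOf i₀ := Perm.cycle_is_cycleOf hi₀ hmem
  have hi₀s : i₀ ∈ (π.cycleOf i₀).support := hceq ▸ hi₀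
  have hscard : (π.cycleOf i₀).support.card = r := by rw [← hceq]; exact hcard
  have hco := π.isCycleOn_support_cycleOf i₀
  have hdist : ∀ m n, m < r → n < r → (π ^ m) i₀ = (π ^ n) i₀ → m = n := by
    intro m n hm hn h
    have h2 := (hco.pow_apply_eq_pow_apply hi₀s).mp h
    rw [hscard, Nat.ModEq] at h2
    rwa [Nat.mod_eq_of_lt hm, Nat.mod_eq_of_lt hn] at h2
  set D : Finset (Fin t) := (Finset.range (r - 1)).image (fun k => (π ^ (k + 1)) i₀) with hD
  have hDcard : D.card = r - 1 := by
    rw [hD, Finset.card_image_of_injOn, Finset.card_range]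
    intro a ha b hb hab
    have ha' := Finset.mem_range.mp ha
    have hb' := Finset.mem_range.mp hb
    have := hdist (a + 1) (b + 1) (by omega) (by omega) hab
    omega
  have hi₀D : i₀ ∉ D := by
    intro hmem'
    obtain ⟨k, hk, hk'⟩ := Finset.mem_image.mp hmem'
    have hk'' := Finset.mem_range.mp hk
    have h0 : (π ^ 0) i₀ = (π ^ (k + 1)) i₀ := by simpa using hk'.symm
    have := hdist 0 (k + 1) (by omega) (by omega) h0
    omega
  have key : ∀ (f : Fin t → Ω), (baseHom t Ω xs * topHom t Ω π) f = f →
      ∀ i, f i = xs i (f (π⁻¹ i)) := fun f hf i => (congrFun hf i).symm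
  have step : ∀ (f : Fin t → Ω), (baseHom t Ω xs * topHom t Ω π) f = f →
      ∀ k : ℕ, f ((π ^ (k + 1)) i₀) = xs ((π ^ (k + 1)) i₀) (f ((π ^ k) i₀)) := by
    intro f hf k
    have hinv : π⁻¹ ((π ^ (k + 1)) i₀) = (π ^ k) i₀ := by
      rw [← Perm.mul_apply]
      congr 1
      group
    rw [key f hf ((π ^ (k + 1)) i₀), hinv]
  set F : {f : Fin t → Ω // (baseHom t Ω xs * topHom t Ω π) f = f} →
      ({i : Fin t // i ∉ D} → Ω) := fun f j => f.1 j.1 with hF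
  have hinj : Function.Injective F := by
    rintro ⟨f, hf⟩ ⟨g, hg⟩ h
    have hout : ∀ i, i ∉ D → f i = g i := fun i hi => congrFun h ⟨i, hi⟩
    have hcyc' : ∀ k, k < r → f ((π ^ k) i₀) = g ((π ^ k) i₀) := by
      intro k
      induction k with
      | zero => intro _; simpa using hout i₀ hi₀D
      | succ k ih =>
        intro hk
        rw [step f hf k, step g hg k, ih (by omega)]
    refine Subtype.ext (funext fun i => ?_)
    by_cases hi : i ∈ D
    · obtain ⟨k, hk, rfl⟩ := Finset.mem_image.mp hi
      exact hcyc' (k + 1) (by have := Finset.mem_range.mp hk; omega)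
    · exact hout i hi
  have hsub : Nat.card {i : Fin t // i ∉ D} = t - (r - 1) := by
    rw [Nat.card_eq_fintype_card, Fintype.card_subtype_compl]
    congr 1
    · exact Fintype.card_fin t
    · rw [Fintype.card_coe, hDcard]
  have h1 : Nat.card {f : Fin t → Ω // (baseHom t Ω xs * topHom t Ω π) f = f} ≤
      Nat.card Ω ^ (t - (r - 1)) := by
    calc Nat.card {f : Fin t → Ω // (baseHom t Ω xs * topHom t Ω π) f = f}
        ≤ Nat.card ({i : Fin t // i ∉ D} → Ω) := Nat.card_le_card_of_injective F hinj
      _ = Nat.card Ω ^ (t - (r - 1)) := by rw [Nat.card_fun, hsub]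
  refine ⟨h1, ?_⟩
  have hrt : r - 1 ≤ t := by
    have := Finset.card_le_univ D
    simp only [Finset.card_univ, Fintype.card_fin] at this
    omega
  have hq0 : (0 : ℝ) < (Nat.card Ω : ℝ) := by
    have : 0 < Nat.card Ω := by omega
    exact_mod_cast this
  rw [div_le_iff₀ (by positivity)]
  calc (Nat.card {f : Fin t → Ω // (baseHom t Ω xs * topHom t Ω π) f = f} : ℝ)
      ≤ (Nat.card Ω : ℝ) ^ (t - (r - 1)) := by exact_mod_cast h1
    _ = (Nat.card Ω : ℝ) ^ (1 - (r : ℤ)) * (Nat.card Ω : ℝ) ^ t := by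
        rw [← zpow_natCast (Nat.card Ω : ℝ) (t - (r - 1)), ← zpow_natCast (Nat.card Ω : ℝ) t,
          ← zpow_add₀ (ne_of_gt hq0)]
        congr 1
        omega
end
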